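/- arXiv:2103.00941 — 5 statements merged into one kernel-verified Lean document; each statement's English description precedes it below -/
import Mathlib

section
/- Let G be a locally finite simple graph, x a vertex with d(x) = 1 (a leaf), and y its unique neighbor. Then the Lin–Lu–Yau Ricci curvature satisfies k(x,y) > 0. -/
open scoped BigOperators

namespace RicciFlatPaper

variable {V : Type*}

/-- Degree of a vertex (as the number of neighbors). -/
noncomputable def deg (G : SimpleGraph V) (v : V) : ℕ := (G.neighborSet v).ncard

/-- A graph is locally finite if every vertex has finitely many neighbors. -/
def LocFin (G : SimpleGraph V) : Prop := ∀ v : V, (G.neighborSet v).Finite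

/-- A finitely supported probability distribution on the vertex set. -/
def IsProbDist (μ : V → ℝ) : Prop :=
  (∀ v, 0 ≤ μ v) ∧ (Function.support μ).Finite ∧ ∑ᶠ v, μ v = 1

/-- A (finitely supported) coupling between two distributions. -/
def IsCoupling (μ₁ μ₂ : V → ℝ) (A : V → V → ℝ) : Prop :=
  (∀ x y, 0 ≤ A x y) ∧ (Function.support fun p : V × V => A p.1 p.2).Finite ∧
  (∀ x, ∑ᶠ y, A x y = μ₁ x) ∧ (∀ y, ∑ᶠ x, A x y = μ₂ y)

/-- Transportation cost of a coupling with respect to the graph distance. -/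
noncomputable def cost (G : SimpleGraph V) (A : V → V → ℝ) : ℝ :=
  ∑ᶠ p : V × V, A p.1 p.2 * (G.dist p.1 p.2 : ℝ)

/-- The transportation (Wasserstein) distance between two distributions. -/
noncomputable def W (G : SimpleGraph V) (μ₁ μ₂ : V → ℝ) : ℝ :=
  sInf {c : ℝ | ∃ A : V → V → ℝ, IsCoupling μ₁ μ₂ A ∧ c = cost G A}

open Classical in
/-- The lazy neighborhood measure `μ_x^α`. -/
noncomputable def mu (G : SimpleGraph V) (α : ℝ) (x : V) : V → ℝ :=
  fun z => if z = x then α else if G.Adj x z then (1 - α) / (deg G x : ℝ) else 0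

/-- The `α`-Ollivier–Ricci curvature `k_α(x,y) = 1 - W(μ_x^α, μ_y^α)`. -/
noncomputable def kIdle (G : SimpleGraph V) (α : ℝ) (x y : V) : ℝ :=
  1 - W G (mu G α x) (mu G α y)

/-- `HasRicci G x y k` means the Lin–Lu–Yau curvature `k(x,y) = lim_{α→1} k_α(x,y)/(1-α)`
exists and equals `k`. -/
def HasRicci (G : SimpleGraph V) (x y : V) (k : ℝ) : Prop :=
  Filter.Tendsto (fun α : ℝ => kIdle G α x y / (1 - α))
    (nhdsWithin (1 : ℝ) (Set.Iio (1 : ℝ))) (nhds k)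

/-- A graph is Ricci-flat if the Lin–Lu–Yau curvature vanishes on every edge. -/
def RicciFlat (G : SimpleGraph V) : Prop := ∀ x y : V, G.Adj x y → HasRicci G x y 0

/-- `f` is 1-Lipschitz with respect to the graph distance. -/
def Lip1 (G : SimpleGraph V) (f : V → ℝ) : Prop :=
  ∀ u v : V, f u - f v ≤ (G.dist u v : ℝ)

/-- The edge `(x,y)` is contained in some cycle of length `n`. -/
def EdgeInCycle (G : SimpleGraph V) (n : ℕ) (x y : V) : Prop :=
  ∃ (u : V) (w : G.Walk u u), w.IsCycle ∧ w.length = n ∧ s(x, y) ∈ w.edges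

end RicciFlatPaper


namespace RicciFlatPaper

variable {V : Type*}

open Classical Function Finset in
/-- Exact value of the Wasserstein distance across a leaf edge, for `α ∈ [1/2, 1)`. -/
lemma W_leaf_eq (G : SimpleGraph V) (hG : G.Connected) (hlf : LocFin G)
    (x y : V) (hleaf : deg G x = 1) (hxy : G.Adj x y) {α : ℝ}
    (hα1 : (1:ℝ)/2 ≤ α) (hα2 : α < 1) :
    W G (mu G α x) (mu G α y) = 1 - 2*(1-α)/(deg G y : ℝ) := by
  classical
  set d : ℕ := deg G y with hddef
  -- Basic setup about neighborhoods
  have hNx : G.neighborSet x = {y} := by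
    obtain ⟨a, ha⟩ := Set.ncard_eq_one.mp hleaf
    have hy : y ∈ G.neighborSet x := hxy
    rw [ha] at hy
    rw [ha, Set.mem_singleton_iff.mp hy]
  have hadjx : ∀ z, G.Adj x z ↔ z = y := fun z => by
    rw [← SimpleGraph.mem_neighborSet, hNx, Set.mem_singleton_iff]
  set Ny : Finset V := (hlf y).toFinset with hNydef
  have hmemNy : ∀ z, z ∈ Ny ↔ G.Adj y z := fun z => by
    simp [hNydef, Set.Finite.mem_toFinset]
  have hxNy : x ∈ Ny := (hmemNy x).mpr hxy.symm
  have hyNy : y ∉ Ny := fun h => G.irrefl ((hmemNy y).mp h)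
  have hdcard : Ny.card = d := by
    rw [hddef, deg, Set.ncard_eq_toFinset_card _ (hlf y)]
  have hd1 : 1 ≤ d := hdcard ▸ Finset.card_pos.mpr ⟨x, hxNy⟩
  have hdR : (0:ℝ) < (d:ℝ) := by exact_mod_cast hd1
  have hxyne : x ≠ y := hxy.ne
  have hyxne : y ≠ x := hxyne.symm
  -- distances
  have hdxy : G.dist x y = 1 := SimpleGraph.dist_eq_one_iff_adj.mpr hxy
  have hdist2 : ∀ z, G.Adj y z → z ≠ x → G.dist x z = 2 := by
    intro z hz hzx
    have hne : x ≠ z := fun h => hzx h.symm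
    have h2 : G.dist x z ≤ 2 := by
      have := G.dist_le (SimpleGraph.Walk.cons hxy (SimpleGraph.Walk.cons hz SimpleGraph.Walk.nil))
      simpa using this
    have h0 : 0 < G.dist x z := hG.pos_dist_of_ne hne
    have h1 : G.dist x z ≠ 1 := by
      intro h
      have := (hadjx z).mp (SimpleGraph.dist_eq_one_iff_adj.mp h)
      exact G.irrefl (this ▸ hz)
    omega
  -- values of mu
  have hmux_x : mu G α x x = α := by simp [mu]
  have hmux_y : mu G α x y = 1 - α := by
    simp [mu, hyxne, hxy, hleaf]
  have hmux_o : ∀ u, u ≠ x → u ≠ y → mu G α x u = 0 := by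
    intro u h1 h2
    simp only [mu, if_neg h1]
    rw [if_neg]
    intro hadj
    exact h2 ((hadjx u).mp hadj)
  have hmuy_y : mu G α y y = α := by simp [mu]
  have hmuy_x : mu G α y x = (1-α)/(d : ℝ) := by
    simp [mu, hxyne, hxy.symm, hddef]
  have hmuy_o : ∀ z, z ≠ y → mu G α y z = if G.Adj y z then (1-α)/(d:ℝ) else 0 := by
    intro z h1
    simp [mu, h1, hddef]
  have hα1' : (0:ℝ) ≤ 2*α - 1 := by linarith
  have hα2' : (0:ℝ) ≤ 1 - α := by linarith
  have hq0 : (0:ℝ) ≤ (1-α)/(d:ℝ) := div_nonneg hα2' hdR.le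
  -- the explicit coupling
  set A : V → V → ℝ := fun u v =>
    if u = x then
      (if v = x then (1-α)/(d:ℝ) else if v = y then 2*α-1
       else if G.Adj y v then (1-α)/(d:ℝ) else 0)
    else if u = y ∧ v = y then 1-α else 0 with hAdef
  have hAxx : A x x = (1-α)/(d:ℝ) := by
    simp [hAdef]
  have hAxy : A x y = 2*α-1 := by
    simp [hAdef, hyxne]
  have hAxo : ∀ v, v ≠ x → v ≠ y → A x v = if G.Adj y v then (1-α)/(d:ℝ) else 0 := by
    intro v h1 h2
    simp [hAdef, h1, h2]
  have hAyy : A y y = 1-α := by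
    simp [hAdef, hyxne]
  have hAyo : ∀ v, v ≠ y → A y v = 0 := by
    intro v h1
    simp [hAdef, hyxne, h1]
  have hAo : ∀ u v, u ≠ x → u ≠ y → A u v = 0 := by
    intro u v h1 h2
    simp [hAdef, h1, h2]
  have hAxNy : ∀ v ∈ Ny, A x v = (1-α)/(d:ℝ) := by
    intro v hv
    have hadj : G.Adj y v := (hmemNy v).mp hv
    have hvy : v ≠ y := fun h => G.irrefl (h ▸ hadj)
    by_cases hvx : v = x
    · rw [hvx, hAxx]
    · rw [hAxo v hvx hvy, if_pos hadj]
  set L : ℝ := 1 - 2*(1-α)/(d:ℝ) with hLdef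
  have hAsupp : (Function.support fun p : V × V => A p.1 p.2) ⊆
      ↑(({x, y} : Finset V) ×ˢ (insert y Ny)) := by
    rintro ⟨u, v⟩ hp
    simp only [Function.mem_support] at hp
    simp only [Finset.coe_product, Set.mem_prod, Finset.coe_insert, Finset.mem_coe,
      Finset.coe_singleton, Set.mem_insert_iff, Set.mem_singleton_iff, Finset.mem_insert]
    by_cases hu : u = x
    · refine ⟨Or.inl hu, ?_⟩
      by_cases hv : v = x
      · exact Or.inr ((hmemNy v).mpr (hv ▸ hxy.symm))
      · by_cases hv2 : v = y
        · exact Or.inl hv2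
        · rw [hu, hAxo v hv hv2] at hp
          by_cases hv3 : G.Adj y v
          · exact Or.inr ((hmemNy v).mpr hv3)
          · rw [if_neg hv3] at hp; exact absurd rfl hp
    · by_cases hu2 : u = y
      · refine ⟨Or.inr hu2, Or.inl ?_⟩
        by_contra hv
        rw [hu2, hAyo v hv] at hp
        exact hp rfl
      · rw [hAo u v hu hu2] at hp; exact absurd rfl hp
  have hrowsupp : ∀ u, (Function.support fun v => A u v) ⊆ ↑(insert y Ny) := by
    intro u v hv
    have h : ((u, v) : V × V) ∈ Function.support fun p : V × V => A p.1 p.2 := hv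
    have := hAsupp h
    simp only [Finset.coe_product, Set.mem_prod, Finset.mem_coe] at this
    exact this.2
  have hcolsupp : ∀ v, (Function.support fun u => A u v) ⊆ ↑({x, y} : Finset V) := by
    intro v u hu
    have h : ((u, v) : V × V) ∈ Function.support fun p : V × V => A p.1 p.2 := hu
    have := hAsupp h
    simp only [Finset.coe_product, Set.mem_prod, Finset.mem_coe] at this
    exact this.1
  have hrowx : ∑ᶠ v, A x v = α := by
    rw [finsum_eq_finset_sum_of_support_subset _ (hrowsupp x), Finset.sum_insert hyNy,
      hAxy, Finset.sum_congr rfl hAxNy, Finset.sum_const, hdcard,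
      nsmul_eq_mul, mul_div_cancel₀ _ hdR.ne']
    ring
  have hcoupling : IsCoupling (mu G α x) (mu G α y) A := by
    refine ⟨?_, ?_, ?_, ?_⟩
    · intro u v
      simp only [hAdef]
      split_ifs <;> first | exact hq0 | linarith
    · exact Set.Finite.subset (Finset.finite_toSet _) hAsupp
    · intro u
      by_cases hu : u = x
      · rw [hu, hrowx, hmux_x]
      · by_cases hu2 : u = y
        · rw [hu2, finsum_eq_single _ y (fun v hv => hAyo v hv), hAyy, hmux_y]
        · rw [hmux_o u hu hu2, finsum_eq_zero_of_forall_eq_zero (fun v => hAo u v hu hu2)]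
    · intro v
      by_cases hv : v = x
      · rw [hv, hmuy_x, finsum_eq_single _ x
          (fun u hu => by
            by_cases hu2 : u = y
            · rw [hu2]; exact hAyo x hxyne
            · exact hAo u x hu hu2), hAxx]
      · by_cases hv2 : v = y
        · rw [hv2, hmuy_y,
            finsum_eq_finset_sum_of_support_subset _ (hcolsupp y),
            Finset.sum_pair hxyne, hAxy, hAyy]
          ring
        · rw [hmuy_o v hv2, finsum_eq_single _ x
            (fun u hu => by
              by_cases hu2 : u = y
              · rw [hu2]; exact hAyo v hv2
              · exact hAo u v hu hu2), hAxo v hv hv2]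
  have hcostA : cost G A = L := by
    have hsupp : (Function.support fun p : V × V => A p.1 p.2 * (G.dist p.1 p.2 : ℝ)) ⊆
        ↑(({x, y} : Finset V) ×ˢ (insert y Ny)) := by
      intro p hp
      refine hAsupp ?_
      simp only [Function.mem_support] at hp ⊢
      exact fun h => hp (by rw [h, zero_mul])
    rw [cost, finsum_eq_finset_sum_of_support_subset _ hsupp, Finset.sum_product,
      Finset.sum_pair hxyne]
    have hyrow : ∑ v ∈ insert y Ny, A y v * (G.dist y v : ℝ) = 0 := by
      refine Finset.sum_eq_zero fun v hv => ?_
      by_cases hvy : v = y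
      · rw [hvy, SimpleGraph.dist_self]; simp
      · rw [hAyo v hvy, zero_mul]
    have hxrow : ∑ v ∈ insert y Ny, A x v * (G.dist x v : ℝ)
        = (2*α-1) + ((d:ℝ) - 1) * ((1-α)/(d:ℝ) * 2) := by
      rw [Finset.sum_insert hyNy, hAxy, hdxy]
      have herase : ∑ v ∈ Ny, A x v * (G.dist x v : ℝ)
          = ∑ v ∈ Ny.erase x, A x v * (G.dist x v : ℝ) := by
        rw [← Finset.add_sum_erase _ _ hxNy, hAxx, SimpleGraph.dist_self]
        push_cast
        ring
      rw [herase]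
      have hconst : ∀ v ∈ Ny.erase x, A x v * (G.dist x v : ℝ) = (1-α)/(d:ℝ) * 2 := by
        intro v hv
        have hvx : v ≠ x := Finset.ne_of_mem_erase hv
        have hvNy : v ∈ Ny := Finset.mem_of_mem_erase hv
        rw [hAxNy v hvNy, hdist2 v ((hmemNy v).mp hvNy) hvx]
        norm_num
      rw [Finset.sum_congr rfl hconst, Finset.sum_const, Finset.card_erase_of_mem hxNy,
        hdcard, nsmul_eq_mul, Nat.cast_sub hd1, Nat.cast_one]
      push_cast
      ring
    rw [hyrow, hxrow, hLdef]
    field_simp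
    ring
  -- the Lipschitz lower bound
  have hlb : ∀ c ∈ {c : ℝ | ∃ B : V → V → ℝ, IsCoupling (mu G α x) (mu G α y) B ∧ c = cost G B},
      L ≤ c := by
    rintro c ⟨B, ⟨hBnn, hBfin, hBrow, hBcol⟩, rfl⟩
    set f : V → ℝ := fun v => max 0 (2 - (G.dist x v : ℝ)) with hfdef
    have hf0 : ∀ v, 0 ≤ f v := fun v => le_max_left _ _
    have hfge : ∀ v, 2 - (G.dist x v : ℝ) ≤ f v := fun v => le_max_right _ _
    have hfx : f x = 2 := by norm_num [hfdef, SimpleGraph.dist_self]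
    have hfy : f y = 1 := by norm_num [hfdef, hdxy]
    have hfz : ∀ v, v ≠ x → G.Adj y v → f v = 0 := by
      intro v h1 h2
      simp [hfdef, hdist2 v h2 h1]
    have hLip : ∀ u v, f u - f v ≤ (G.dist u v : ℝ) := by
      intro u v
      have ht : (G.dist x v : ℝ) ≤ (G.dist x u : ℝ) + (G.dist u v : ℝ) := by
        exact_mod_cast hG.dist_triangle
      have hd0 : (0:ℝ) ≤ (G.dist u v : ℝ) := Nat.cast_nonneg _
      rcases le_or_gt (2 - (G.dist x u : ℝ)) 0 with h | h
      · have : f u = 0 := max_eq_left h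
        rw [this]
        have := hf0 v
        linarith
      · have : f u = 2 - (G.dist x u : ℝ) := max_eq_right h.le
        rw [this]
        have := hfge v
        linarith
    set sB : Finset (V × V) := hBfin.toFinset with hsBdef
    set T : Finset V := sB.image Prod.fst ∪ sB.image Prod.snd ∪ ({x, y} ∪ insert y Ny)
      with hTdef
    have hxyT : x ∈ T ∧ y ∈ T := by
      constructor <;> (rw [hTdef]; simp)
    have hBT : ∀ u v, B u v ≠ 0 → u ∈ T ∧ v ∈ T := by
      intro u v h
      have hmem : (u, v) ∈ sB := by
        rw [hsBdef, Set.Finite.mem_toFinset]; exact h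
      constructor <;> rw [hTdef]
      · exact Finset.mem_union_left _ (Finset.mem_union_left _
          (Finset.mem_image_of_mem _ hmem))
      · exact Finset.mem_union_left _ (Finset.mem_union_right _
          (Finset.mem_image_of_mem _ hmem))
    have hrowT : ∀ u, mu G α x u = ∑ v ∈ T, B u v := by
      intro u
      rw [← hBrow u]
      exact finsum_eq_finset_sum_of_support_subset _ (fun v hv => (hBT u v hv).2)
    have hcolT : ∀ v, mu G α y v = ∑ u ∈ T, B u v := by
      intro v
      rw [← hBcol v]
      exact finsum_eq_finset_sum_of_support_subset _ (fun u hu => (hBT u v hu).1)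
    have hcostT : cost G B = ∑ u ∈ T, ∑ v ∈ T, B u v * (G.dist u v : ℝ) := by
      rw [cost, ← Finset.sum_product']
      refine finsum_eq_finset_sum_of_support_subset _ fun p hp => ?_
      simp only [Function.mem_support] at hp
      have : B p.1 p.2 ≠ 0 := fun h => hp (by rw [h, zero_mul])
      obtain ⟨h1, h2⟩ := hBT p.1 p.2 this
      exact Finset.mk_mem_product h1 h2
    -- duality inequality
    have hkey : (∑ u ∈ T, f u * mu G α x u) - (∑ v ∈ T, f v * mu G α y v) ≤ cost G B := by
      have h1 : ∑ u ∈ T, f u * mu G α x u = ∑ u ∈ T, ∑ v ∈ T, f u * B u v := by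
        refine Finset.sum_congr rfl fun u _ => ?_
        rw [hrowT u, Finset.mul_sum]
      have h2 : ∑ v ∈ T, f v * mu G α y v = ∑ u ∈ T, ∑ v ∈ T, f v * B u v := by
        rw [Finset.sum_comm]
        refine Finset.sum_congr rfl fun v _ => ?_
        rw [hcolT v, Finset.mul_sum]
      rw [h1, h2, ← Finset.sum_sub_distrib, hcostT]
      refine Finset.sum_le_sum fun u _ => ?_
      rw [← Finset.sum_sub_distrib]
      refine Finset.sum_le_sum fun v _ => ?_
      rw [← sub_mul, mul_comm (B u v)]
      exact mul_le_mul_of_nonneg_right (hLip u v) (hBnn u v)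
    -- evaluate the two sums
    have heval1 : ∑ u ∈ T, f u * mu G α x u = 2*α + (1-α) := by
      have hsub : (Function.support fun u => f u * mu G α x u) ⊆ ↑({x, y} : Finset V) := by
        intro u hu
        simp only [Function.mem_support] at hu
        simp only [Finset.coe_insert, Finset.coe_singleton, Set.mem_insert_iff,
          Set.mem_singleton_iff]
        by_contra h
        push_neg at h
        rw [hmux_o u h.1 h.2, mul_zero] at hu
        exact hu rfl
      have hsub2 : (Function.support fun u => f u * mu G α x u) ⊆ ↑T := by
        refine hsub.trans ?_
        intro u hu
        simp only [Finset.coe_insert, Finset.coe_singleton, Set.mem_insert_iff,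
          Set.mem_singleton_iff] at hu
        rcases hu with rfl | rfl
        · exact hxyT.1
        · exact hxyT.2
      rw [← finsum_eq_finset_sum_of_support_subset _ hsub2,
        finsum_eq_finset_sum_of_support_subset _ hsub, Finset.sum_pair hxyne,
        hmux_x, hmux_y, hfx, hfy]
      ring
    have heval2 : ∑ v ∈ T, f v * mu G α y v = α + 2*((1-α)/(d:ℝ)) := by
      have hsub : (Function.support fun v => f v * mu G α y v) ⊆ ↑(insert y Ny) := by
        intro v hv
        simp only [Function.mem_support] at hv
        simp only [Finset.coe_insert, Set.mem_insert_iff, Finset.mem_coe]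
        by_contra h
        push_neg at h
        rw [hmuy_o v h.1, if_neg (fun ha => h.2 ((hmemNy v).mpr ha)), mul_zero] at hv
        exact hv rfl
      have hsub2 : (Function.support fun v => f v * mu G α y v) ⊆ ↑T := by
        refine hsub.trans ?_
        intro v hv
        rw [hTdef]
        simp only [Finset.coe_insert, Set.mem_insert_iff, Finset.mem_coe] at hv
        refine Finset.mem_union_right _ (Finset.mem_union_right _ ?_)
        rcases hv with rfl | hv
        · exact Finset.mem_insert_self _ _
        · exact Finset.mem_insert_of_mem hv
      rw [← finsum_eq_finset_sum_of_support_subset _ hsub2,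
        finsum_eq_finset_sum_of_support_subset _ hsub, Finset.sum_insert hyNy,
        hmuy_y, hfy, one_mul]
      have hcongr : ∀ v ∈ Ny, f v * mu G α y v
          = if v = x then 2*((1-α)/(d:ℝ)) else 0 := by
        intro v hv
        have hadj : G.Adj y v := (hmemNy v).mp hv
        have hvy : v ≠ y := fun h => G.irrefl (h ▸ hadj)
        rw [hmuy_o v hvy, if_pos hadj]
        by_cases hvx : v = x
        · rw [if_pos hvx, hvx, hfx]
        · rw [if_neg hvx, hfz v hvx hadj, zero_mul]
      rw [Finset.sum_congr rfl hcongr, Finset.sum_ite_eq' Ny x, if_pos hxNy]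
    rw [heval1, heval2] at hkey
    rw [hLdef]
    have : 2*α + (1-α) - (α + 2*((1-α)/(d:ℝ))) = 1 - 2*(1-α)/(d:ℝ) := by ring
    linarith [hkey, this.symm.le]
  rw [W, hLdef]
  refine le_antisymm ?_ ?_
  · exact csInf_le ⟨L, hlb⟩ ⟨A, hcoupling, hcostA.symm⟩
  · exact le_csInf ⟨L, A, hcoupling, hcostA.symm⟩ hlb

end RicciFlatPaper

namespace RicciFlatPaper

variable {V : Type*}

/-- a leaf edge has positive Lin–Lu–Yau Ricci curvature. -/
theorem leaf_edge_positive_curvature (G : SimpleGraph V) (hG : G.Connected) (hlf : LocFin G)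
    (x y : V) (hleaf : deg G x = 1) (hxy : G.Adj x y) :
    ∃ k : ℝ, 0 < k ∧ HasRicci G x y k := by
  classical
  have hd1 : 1 ≤ deg G y := by
    rw [deg, Set.ncard_eq_toFinset_card _ (hlf y)]
    exact Finset.card_pos.mpr ⟨x, by
      rw [Set.Finite.mem_toFinset]
      exact hxy.symm⟩
  have hdR : (0:ℝ) < (deg G y : ℝ) := by exact_mod_cast hd1
  refine ⟨2/(deg G y : ℝ), by positivity, ?_⟩
  rw [HasRicci]
  have hmem : Set.Ioo (1/2 : ℝ) 1 ∈ nhdsWithin 1 (Set.Iio 1) :=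
    Ioo_mem_nhdsLT_of_mem ⟨by norm_num, le_refl 1⟩
  refine Filter.Tendsto.congr' ?_ tendsto_const_nhds
  refine Filter.eventuallyEq_of_mem hmem fun α hα => ?_
  have h1 : α < 1 := hα.2
  have h0 : (1:ℝ)/2 ≤ α := hα.1.le
  have hne : (1:ℝ) - α ≠ 0 := sub_ne_zero.mpr (ne_of_gt (by linarith))
  rw [kIdle, W_leaf_eq G hG hlf x y hleaf hxy h0 h1]
  field_simp
  ring

end RicciFlatPaper
end

section
/- A Ricci-flat graph (a graph in which the Lin–Lu–Yau Ricci curvature vanishes on every edge) contains no vertex of degree 1. -/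
open scoped BigOperators

/-!
If `x` is a leaf hanging from `y`, with `d = deg y`, then `μ_x^α` can be transported to `μ_y^α`
cheaply: `x` keeps `(1-α)/d` in place and pushes the rest of its mass `α` onto `y`, while `y` sends
`(1-α)/d` to each of its other neighbors and keeps the remainder. This plan costs
`1 - 2(1-α)/d`, so `k_α(x,y) ≥ 2(1-α)/d` and `k(x,y) ≥ 2/d > 0`.
-/

namespace RicciFlatPaper

open Function

variable {V : Type*}

lemma finsum_single_add_single_mul [DecidableEq V] (a b : V) (r s : ℝ) (φ : V → ℝ) :
    ∑ᶠ z, (Pi.single a r + Pi.single b s : V → ℝ) z * φ z = r * φ a + s * φ b := by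
  have hfin (c : V) (t : ℝ) : HasFiniteSupport fun z => (Pi.single c t : V → ℝ) z * φ z :=
    (Set.finite_singleton c).subset ((support_mul_subset_left _ _).trans Pi.support_single_subset)
  simp only [Pi.add_apply, add_mul]
  rw [finsum_add_distrib (hfin a r) (hfin b s), finsum_eq_single _ a fun z hz => by simp [hz],
    finsum_eq_single _ b fun z hz => by simp [hz]]
  simp

section

variable {G : SimpleGraph V}

lemma deg_pos_of_adj {x y : V} (hx : (G.neighborSet x).Finite) (h : G.Adj x y) : 0 < deg G x :=
  (Set.ncard_pos hx).mpr ⟨y, h⟩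

section Transport

variable {μ₁ μ₂ ν₁ ν₂ : V → ℝ} {A B : V → V → ℝ}

lemma W_le_cost (hA : IsCoupling μ₁ μ₂ A) : W G μ₁ μ₂ ≤ cost G A := by
  refine csInf_le ⟨0, ?_⟩ ⟨A, hA, rfl⟩
  rintro _ ⟨B, hB, rfl⟩
  exact finsum_nonneg fun p => mul_nonneg (hB.1 _ _) (Nat.cast_nonneg _)

lemma IsCoupling.add (hA : IsCoupling μ₁ μ₂ A) (hB : IsCoupling ν₁ ν₂ B) :
    IsCoupling (μ₁ + ν₁) (μ₂ + ν₂) (A + B) := by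
  obtain ⟨hA₀, hAfin, hArow, hAcol⟩ := hA
  obtain ⟨hB₀, hBfin, hBrow, hBcol⟩ := hB
  refine ⟨fun x y => add_nonneg (hA₀ x y) (hB₀ x y),
    (hAfin.union hBfin).subset (support_add _ _), fun x => ?_, fun y => ?_⟩
  · simp only [Pi.add_apply]
    rw [finsum_add_distrib (support_along_fiber_finite_of_finite _ x hAfin)
      (support_along_fiber_finite_of_finite _ x hBfin), hArow, hBrow]
  · simp only [Pi.add_apply]
    rw [finsum_add_distrib (hAfin.preimage (Prod.mk_left_injective y).injOn)
      (hBfin.preimage (Prod.mk_left_injective y).injOn), hAcol, hBcol]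

lemma cost_add (hA : HasFiniteSupport fun p : V × V => A p.1 p.2)
    (hB : HasFiniteSupport fun p : V × V => B p.1 p.2) :
    cost G (A + B) = cost G A + cost G B := by
  simp only [cost, Pi.add_apply, add_mul]
  exact finsum_add_distrib (hA.subset (support_mul_subset_left _ _))
    (hB.subset (support_mul_subset_left _ _))

open Classical in
noncomputable def planFrom (x : V) (f : V → ℝ) : V → V → ℝ :=
  fun u w => if u = x then f w else 0

lemma hasFiniteSupport_planFrom {f : V → ℝ} (hf : HasFiniteSupport f) (x : V) :
    HasFiniteSupport fun p : V × V => planFrom x f p.1 p.2 := by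
  refine ((Set.finite_singleton x).prod hf).subset fun p hp => ?_
  by_cases h : p.1 = x <;> simp_all [planFrom]

lemma isCoupling_planFrom [DecidableEq V] {f : V → ℝ} (hf₀ : 0 ≤ f) (hf : HasFiniteSupport f)
    (x : V) : IsCoupling (Pi.single x (∑ᶠ w, f w)) f (planFrom x f) := by
  refine ⟨fun u w => ?_, hasFiniteSupport_planFrom hf x, fun u => ?_, fun w => ?_⟩
  · by_cases h : u = x
    · simpa [planFrom, h] using hf₀ w
    · simp [planFrom, h]
  · by_cases h : u = x <;> simp [planFrom, h]
  · rw [finsum_eq_single _ x fun u h => by simp [planFrom, h]]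
    simp [planFrom]

lemma cost_planFrom {f : V → ℝ} (hf : HasFiniteSupport f) (x : V) :
    cost G (planFrom x f) = ∑ᶠ w, f w * G.dist x w := by
  rw [cost, finsum_curry _ ((hasFiniteSupport_planFrom hf x).subset
      (support_mul_subset_left _ _)),
    finsum_eq_single _ x fun u h => by simp [planFrom, h]]
  simp [planFrom]

end Transport

section LazyMeasure

variable {α : ℝ} {x y : V}

lemma mu_nonneg (hα₀ : 0 ≤ α) (hα₁ : α ≤ 1) (x : V) : 0 ≤ mu G α x := fun z => by
  have : 0 ≤ (1 - α) / deg G x := div_nonneg (by linarith) (Nat.cast_nonneg _)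
  unfold mu
  split_ifs
  exacts [hα₀, this, le_rfl]

lemma support_mu_subset (α : ℝ) (x : V) : support (mu G α x) ⊆ insert x (G.neighborSet x) := by
  intro z hz
  by_contra h
  simp only [Set.mem_insert_iff, SimpleGraph.mem_neighborSet, not_or] at h
  simp [mu, h.1, h.2] at hz

lemma hasFiniteSupport_mu (hx : (G.neighborSet x).Finite) (α : ℝ) : HasFiniteSupport (mu G α x) :=
  (hx.insert x).subset (support_mu_subset α x)

lemma finsum_mu_mul (hx : (G.neighborSet x).Finite) (hdeg : deg G x ≠ 0) {φ : V → ℝ}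
    (hφ : ∀ z, G.Adj x z → φ z = 1) : ∑ᶠ z, mu G α x z * φ z = α * φ x + (1 - α) := by
  classical
  have hsupp : (support fun z => mu G α x z * φ z) ⊆ ↑(insert x hx.toFinset) := by
    simpa using (support_mul_subset_left _ _).trans (support_mu_subset α x)
  have hneighbor : ∀ z ∈ hx.toFinset, mu G α x z * φ z = (1 - α) / deg G x := by
    intro z hz
    rw [Set.Finite.mem_toFinset, SimpleGraph.mem_neighborSet] at hz
    simp [mu, hz, hz.ne', hφ z hz]
  rw [finsum_eq_finsetSum_of_support_subset _ hsupp, Finset.sum_insert (by simp),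
    Finset.sum_congr rfl hneighbor, Finset.sum_const, nsmul_eq_mul,
    ← Set.ncard_eq_toFinset_card _ hx]
  have : (deg G x : ℝ) ≠ 0 := Nat.cast_ne_zero.mpr hdeg
  simp only [mu, if_true]
  rw [deg] at this ⊢
  field_simp

lemma finsum_mu (hx : (G.neighborSet x).Finite) (hdeg : deg G x ≠ 0) :
    ∑ᶠ z, mu G α x z = 1 := by
  simpa using finsum_mu_mul (α := α) (φ := 1) hx hdeg fun _ _ => rfl

lemma finsum_mu_mul_dist (hx : (G.neighborSet x).Finite) (hdeg : deg G x ≠ 0) :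
    ∑ᶠ z, mu G α x z * G.dist x z = 1 - α := by
  simpa using finsum_mu_mul (α := α) (φ := fun z => (G.dist x z : ℝ)) hx hdeg fun z h => by
    simp [SimpleGraph.dist_eq_one_iff_adj.mpr h]

lemma mu_eq_of_neighborSet_eq_singleton [DecidableEq V] (h : G.neighborSet x = {y}) (α : ℝ) :
    mu G α x = Pi.single x α + Pi.single y (1 - α) := by
  have hdeg : deg G x = 1 := by simp [deg, h]
  have hadj : ∀ z, G.Adj x z ↔ z = y := fun z => Set.ext_iff.mp h z
  have hxy : x ≠ y := G.ne_of_adj ((hadj y).mpr rfl)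
  funext z
  by_cases hzx : z = x
  · subst hzx; simp [mu, hxy]
  · by_cases hzy : z = y
    · subst hzy; simp [mu, hzx, hadj, hdeg]
    · simp [mu, hzx, hzy, hadj]

end LazyMeasure

section Leaf

variable {α : ℝ} {x y : V}

lemma W_mu_le_of_neighborSet_eq_singleton (h : G.neighborSet x = {y})
    (hy : (G.neighborSet y).Finite) (hα₀ : 1 / 2 ≤ α) (hα₁ : α ≤ 1) :
    W G (mu G α x) (mu G α y) ≤ 1 - 2 * ((1 - α) / deg G y) := by
  classical
  have hxy : G.Adj x y := show y ∈ G.neighborSet x by rw [h]; rfl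
  have hdeg : deg G y ≠ 0 := (deg_pos_of_adj hy hxy.symm).ne'
  set c := (1 - α) / deg G y
  have hc₀ : 0 ≤ c := div_nonneg (by linarith) (Nat.cast_nonneg _)
  have hc₁ : c ≤ 1 - α :=
    div_le_self (by linarith) (by exact_mod_cast Nat.one_le_iff_ne_zero.mpr hdeg)
  set f : V → ℝ := Pi.single x c + Pi.single y (α - c)
  set g := mu G α y - f
  have hf : HasFiniteSupport f := ((Set.finite_singleton x).union (Set.finite_singleton y)).subset
    ((support_add _ _).trans (Set.union_subset_union Pi.support_single_subset
      Pi.support_single_subset))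
  have hg : HasFiniteSupport g := ((hasFiniteSupport_mu hy α).union hf).subset (support_sub _ _)
  have hf₀ : 0 ≤ f := add_nonneg (Pi.single_nonneg.mpr hc₀) (Pi.single_nonneg.mpr (by linarith))
  have hg₀ : 0 ≤ g := by
    intro z
    by_cases hzx : z = x
    · subst hzx; simp [g, f, mu, hxy.ne, hxy.symm, c]
    · by_cases hzy : z = y
      · subst hzy; simp [g, f, mu, hzx, hc₀]
      · simpa [g, f, hzx, hzy] using mu_nonneg (by linarith) hα₁ y z
  have hsum_f : ∑ᶠ z, f z = α := by
    simpa [f] using finsum_single_add_single_mul x y c (α - c) 1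
  have hsum_g : ∑ᶠ z, g z = 1 - α := by
    simp only [g, Pi.sub_apply]
    rw [finsum_sub_distrib (hasFiniteSupport_mu hy α) hf, finsum_mu hy hdeg, hsum_f]
  have hcoup : IsCoupling (mu G α x) (mu G α y) (planFrom x f + planFrom y g) := by
    have := (isCoupling_planFrom hf₀ hf x).add (isCoupling_planFrom hg₀ hg y)
    rwa [hsum_f, hsum_g, add_sub_cancel, ← mu_eq_of_neighborSet_eq_singleton h] at this
  have hcost_g : ∑ᶠ z, g z * G.dist y z = 1 - α - c := by
    have hfin_mu := (hasFiniteSupport_mu hy α).subset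
      (support_mul_subset_left _ fun z => (G.dist y z : ℝ))
    have hfin_f := hf.subset (support_mul_subset_left _ fun z => (G.dist y z : ℝ))
    simp only [g, Pi.sub_apply, sub_mul]
    rw [finsum_sub_distrib hfin_mu hfin_f, finsum_mu_mul_dist hy hdeg,
      finsum_single_add_single_mul, SimpleGraph.dist_eq_one_iff_adj.mpr hxy.symm]
    simp
  calc W G (mu G α x) (mu G α y) ≤ cost G (planFrom x f + planFrom y g) := W_le_cost hcoup
    _ = ∑ᶠ z, f z * G.dist x z + ∑ᶠ z, g z * G.dist y z := by
      rw [cost_add (hasFiniteSupport_planFrom hf x) (hasFiniteSupport_planFrom hg y),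
        cost_planFrom hf, cost_planFrom hg]
    _ = (α - c) + (1 - α - c) := by
      rw [hcost_g, finsum_single_add_single_mul, SimpleGraph.dist_eq_one_iff_adj.mpr hxy]
      simp
    _ = 1 - 2 * c := by ring

lemma le_of_hasRicci_of_neighborSet_eq_singleton (h : G.neighborSet x = {y})
    (hy : (G.neighborSet y).Finite) {k : ℝ} (hk : HasRicci G x y k) : 2 / deg G y ≤ k := by
  refine ge_of_tendsto hk ?_
  filter_upwards [Ioo_mem_nhdsLT (show (1 / 2 : ℝ) < 1 by norm_num)] with α hα
  have hW := W_mu_le_of_neighborSet_eq_singleton h hy hα.1.le hα.2.le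
  rw [le_div_iff₀ (sub_pos.mpr hα.2), kIdle]
  calc 2 / (deg G y : ℝ) * (1 - α) = 2 * ((1 - α) / deg G y) := by ring
    _ ≤ 1 - W G (mu G α x) (mu G α y) := by linarith

end Leaf

end

theorem ricciFlat_no_leaf_general (G : SimpleGraph V) (hlf : LocFin G)
    (hflat : RicciFlat G) : ∀ v : V, deg G v ≠ 1 := by
  intro v hv
  obtain ⟨y, hy⟩ := Set.ncard_eq_one.mp hv
  have hvy : G.Adj v y := show y ∈ G.neighborSet v by rw [hy]; rfl
  have hdeg : 0 < deg G y := deg_pos_of_adj (hlf y) hvy.symm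
  have hk := le_of_hasRicci_of_neighborSet_eq_singleton hy (hlf y) (hflat v y hvy)
  have : 0 < 2 / (deg G y : ℝ) := by positivity
  linarith

/-- a Ricci-flat graph has no vertex of degree 1. -/
theorem ricciFlat_no_leaf (G : SimpleGraph V) (hG : G.Connected) (hlf : LocFin G)
    (hflat : RicciFlat G) : ∀ v : V, deg G v ≠ 1 :=
  ricciFlat_no_leaf_general G hlf hflat

end RicciFlatPaper
end

section
/- Suppose an edge (x,y) of a locally finite simple graph G is not contained in any cycle of length 3, 4, or 5. Then the Lin–Lu–Yau Ricci curvature satisfies k(x,y) = 2/d(x) + 2/d(y) − 2. -/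
open scoped BigOperators

namespace RicciFlatPaper

variable {V : Type*}

/- ### Auxiliary lemmas -/

lemma coupling_sum_eq (μ₁ μ₂ : V → ℝ) (A : V → V → ℝ) (hA : IsCoupling μ₁ μ₂ A) (f : V → ℝ) :
    ∑ᶠ p : V × V, A p.1 p.2 * (f p.1 - f p.2) = (∑ᶠ u, μ₁ u * f u) - ∑ᶠ v, μ₂ v * f v := by
  classical
  obtain ⟨hpos, hfin, hrow, hcol⟩ := hA
  set s : Finset (V × V) := hfin.toFinset with hs
  have hmem : ∀ u v, A u v ≠ 0 → (u, v) ∈ s := fun u v h => hfin.mem_toFinset.mpr h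
  set s1 := s.image Prod.fst with hs1
  set s2 := s.image Prod.snd with hs2
  have key : ∀ g : V × V → ℝ,
      ∑ᶠ p : V × V, A p.1 p.2 * g p = ∑ p ∈ s1 ×ˢ s2, A p.1 p.2 * g p := by
    intro g
    apply finsum_eq_sum_of_support_subset
    intro p hp
    have hAp : A p.1 p.2 ≠ 0 := by
      intro h; apply hp; simp [Function.mem_support] at hp ⊢; simp [h]
    have := hmem p.1 p.2 hAp
    simp only [Finset.coe_product, Set.mem_prod, Finset.mem_coe]
    exact ⟨Finset.mem_image.mpr ⟨p, this, rfl⟩, Finset.mem_image.mpr ⟨p, this, rfl⟩⟩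
  have hrow' : ∀ u, ∑ v ∈ s2, A u v = μ₁ u := by
    intro u
    rw [← hrow u]
    symm
    apply finsum_eq_sum_of_support_subset
    intro v hv
    exact Finset.mem_coe.mpr (Finset.mem_image.mpr ⟨(u, v), hmem u v hv, rfl⟩)
  have hcol' : ∀ v, ∑ u ∈ s1, A u v = μ₂ v := by
    intro v
    rw [← hcol v]
    symm
    apply finsum_eq_sum_of_support_subset
    intro u hu
    exact Finset.mem_coe.mpr (Finset.mem_image.mpr ⟨(u, v), hmem u v hu, rfl⟩)
  have h1 : ∑ᶠ u, μ₁ u * f u = ∑ u ∈ s1, μ₁ u * f u := by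
    apply finsum_eq_sum_of_support_subset
    intro u hu
    have hμ : μ₁ u ≠ 0 := fun h => hu (by simp [Function.mem_support] at hu ⊢; simp [h])
    rw [← hrow u] at hμ
    obtain ⟨v, hv⟩ : ∃ v, A u v ≠ 0 := by
      by_contra h
      push_neg at h
      exact hμ (by simp [h])
    exact Finset.mem_coe.mpr (Finset.mem_image.mpr ⟨(u, v), hmem u v hv, rfl⟩)
  have h2 : ∑ᶠ v, μ₂ v * f v = ∑ v ∈ s2, μ₂ v * f v := by
    apply finsum_eq_sum_of_support_subset
    intro v hv
    have hμ : μ₂ v ≠ 0 := fun h => hv (by simp [Function.mem_support] at hv ⊢; simp [h])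
    rw [← hcol v] at hμ
    obtain ⟨u, hu⟩ : ∃ u, A u v ≠ 0 := by
      by_contra h
      push_neg at h
      exact hμ (by simp [h])
    exact Finset.mem_coe.mpr (Finset.mem_image.mpr ⟨(u, v), hmem u v hu, rfl⟩)
  rw [key, h1, h2]
  have e1 : ∑ p ∈ s1 ×ˢ s2, A p.1 p.2 * (f p.1 - f p.2)
      = (∑ p ∈ s1 ×ˢ s2, A p.1 p.2 * f p.1) - ∑ p ∈ s1 ×ˢ s2, A p.1 p.2 * f p.2 := by
    rw [← Finset.sum_sub_distrib]
    exact Finset.sum_congr rfl fun p _ => by ring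
  rw [e1]
  congr 1
  · rw [Finset.sum_product]
    refine Finset.sum_congr rfl fun u _ => ?_
    simp only
    rw [← Finset.sum_mul, hrow' u]
  · rw [Finset.sum_product_right]
    refine Finset.sum_congr rfl fun v _ => ?_
    simp only
    rw [← Finset.sum_mul, hcol' v]

lemma edgeInCycle3 {G : SimpleGraph V} {a b c : V}
    (hab : G.Adj a b) (hbc : G.Adj b c) (hca : G.Adj c a) :
    EdgeInCycle G 3 a b := by
  refine ⟨a, .cons hab (.cons hbc (.cons hca .nil)), ?_, rfl, by simp⟩
  have h1 := hab.ne; have h2 := hbc.ne; have h3 := hca.ne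
  constructor
  constructor
  · simp [SimpleGraph.Walk.isTrail_def, List.nodup_cons, Sym2.eq_iff]
    aesop
  · simp
  · simp [List.nodup_cons]
    aesop

lemma edgeInCycle4 {G : SimpleGraph V} {a b c d : V}
    (hab : G.Adj a b) (hbc : G.Adj b c) (hcd : G.Adj c d) (hda : G.Adj d a)
    (hac : a ≠ c) (hbd : b ≠ d) :
    EdgeInCycle G 4 a b := by
  refine ⟨a, .cons hab (.cons hbc (.cons hcd (.cons hda .nil))), ?_, rfl, by simp⟩
  have h1 := hab.ne; have h2 := hbc.ne; have h3 := hcd.ne; have h4 := hda.ne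
  constructor
  constructor
  · simp [SimpleGraph.Walk.isTrail_def, List.nodup_cons, Sym2.eq_iff]
    aesop
  · simp
  · simp [List.nodup_cons]
    aesop

lemma edgeInCycle5 {G : SimpleGraph V} {a b c d e : V}
    (hab : G.Adj a b) (hbc : G.Adj b c) (hcd : G.Adj c d) (hde : G.Adj d e) (hea : G.Adj e a)
    (hac : a ≠ c) (hbd : b ≠ d) (hce : c ≠ e) (had : a ≠ d) (hbe : b ≠ e) :
    EdgeInCycle G 5 a b := by
  refine ⟨a, .cons hab (.cons hbc (.cons hcd (.cons hde (.cons hea .nil)))), ?_, rfl, by simp⟩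
  have h1 := hab.ne; have h2 := hbc.ne; have h3 := hcd.ne
  have h4 := hde.ne; have h5 := hea.ne
  constructor
  constructor
  · simp [SimpleGraph.Walk.isTrail_def, List.nodup_cons, Sym2.eq_iff]
    aesop
  · simp
  · simp [List.nodup_cons]
    aesop

lemma exists_mid_of_dist_eq_two {G : SimpleGraph V} (hG : G.Connected) {u v : V}
    (h : G.dist u v = 2) : ∃ w, G.Adj u w ∧ G.Adj w v := by
  obtain ⟨p, hp⟩ := hG.exists_walk_length_eq_dist u v
  rw [h] at hp
  cases p with
  | nil => simp at hp
  | cons h' q => exact ⟨_, h', q.adj_of_length_eq_one (by simpa using hp)⟩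

/-- The Lipschitz potential used in the curvature computation. -/
noncomputable def fdef (G : SimpleGraph V) (y : V) (N : Finset V) : V → ℝ :=
  fun z => (insert (min 3 (1 + (G.dist z y : ℝ))) (N.image fun v => (G.dist z v : ℝ))).min'
    (Finset.insert_nonempty _ _)

lemma fdef_le_base {G : SimpleGraph V} (y : V) (N : Finset V) (z : V) :
    fdef G y N z ≤ min 3 (1 + (G.dist z y : ℝ)) :=
  Finset.min'_le _ _ (Finset.mem_insert_self _ _)

lemma fdef_le_img {G : SimpleGraph V} (y : V) {N : Finset V} {v : V} (hv : v ∈ N) (z : V) :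
    fdef G y N z ≤ (G.dist z v : ℝ) :=
  Finset.min'_le _ _ (Finset.mem_insert_of_mem (Finset.mem_image_of_mem _ hv))

lemma le_fdef {G : SimpleGraph V} {y : V} {N : Finset V} {z : V} {m : ℝ}
    (h1 : m ≤ min 3 (1 + (G.dist z y : ℝ))) (h2 : ∀ v ∈ N, m ≤ (G.dist z v : ℝ)) :
    m ≤ fdef G y N z := by
  apply Finset.le_min'
  intro r hr
  rcases Finset.mem_insert.mp hr with h | h
  · exact h ▸ h1
  · obtain ⟨v, hv, rfl⟩ := Finset.mem_image.mp h
    exact h2 v hv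

lemma fdef_lip {G : SimpleGraph V} (hG : G.Connected) (y : V) (N : Finset V) (z₁ z₂ : V) :
    fdef G y N z₁ - fdef G y N z₂ ≤ (G.dist z₁ z₂ : ℝ) := by
  rw [sub_le_iff_le_add]
  have hd : (0:ℝ) ≤ (G.dist z₁ z₂ : ℝ) := Nat.cast_nonneg _
  have hmm := Finset.min'_mem (insert (min 3 (1 + (G.dist z₂ y : ℝ)))
      (N.image fun v => (G.dist z₂ v : ℝ))) (Finset.insert_nonempty _ _)
  rcases Finset.mem_insert.mp hmm with hbase | himg
  · have h1 : fdef G y N z₁ ≤ min 3 (1 + (G.dist z₁ y : ℝ)) := fdef_le_base y N z₁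
    have htri : (G.dist z₁ y : ℝ) ≤ (G.dist z₁ z₂ : ℝ) + (G.dist z₂ y : ℝ) := by
      exact_mod_cast hG.dist_triangle
    have hmin : min 3 (1 + (G.dist z₁ y : ℝ)) ≤ min 3 (1 + (G.dist z₂ y : ℝ)) + (G.dist z₁ z₂ : ℝ) := by
      rcases le_total (3:ℝ) (1 + (G.dist z₂ y : ℝ)) with h | h
      · calc min 3 (1 + (G.dist z₁ y : ℝ)) ≤ 3 := min_le_left _ _
          _ ≤ min 3 (1 + (G.dist z₂ y : ℝ)) + (G.dist z₁ z₂ : ℝ) := by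
              rw [min_eq_left h]; linarith
      · calc min 3 (1 + (G.dist z₁ y : ℝ)) ≤ 1 + (G.dist z₁ y : ℝ) := min_le_right _ _
          _ ≤ min 3 (1 + (G.dist z₂ y : ℝ)) + (G.dist z₁ z₂ : ℝ) := by
              rw [min_eq_right h]; linarith
    have hz2 : fdef G y N z₂ = min 3 (1 + (G.dist z₂ y : ℝ)) := hbase
    linarith
  · obtain ⟨v, hv, hval⟩ := Finset.mem_image.mp himg
    have h1 : fdef G y N z₁ ≤ (G.dist z₁ v : ℝ) := fdef_le_img y hv z₁
    have htri : (G.dist z₁ v : ℝ) ≤ (G.dist z₁ z₂ : ℝ) + (G.dist z₂ v : ℝ) := by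
      exact_mod_cast hG.dist_triangle
    have hz2 : fdef G y N z₂ = (G.dist z₂ v : ℝ) := hval.symm
    linarith

set_option maxHeartbeats 1000000 in
/-- if an edge is in no `C₃`, `C₄` or `C₅`, then
`k(x,y) = 2/d(x) + 2/d(y) - 2`. -/
theorem curvature_of_edge_no_C3_C4_C5 (G : SimpleGraph V) (hG : G.Connected) (hlf : LocFin G)
    (x y : V) (hxy : G.Adj x y)
    (h3 : ¬ EdgeInCycle G 3 x y) (h4 : ¬ EdgeInCycle G 4 x y) (h5 : ¬ EdgeInCycle G 5 x y) :
    HasRicci G x y (2 / (deg G x : ℝ) + 2 / (deg G y : ℝ) - 2) := by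
  classical
  set k : ℝ := 2 / (deg G x : ℝ) + 2 / (deg G y : ℝ) - 2 with hk
  have hne : x ≠ y := hxy.ne
  have hne' : y ≠ x := hxy.ne'
  set Nx : Finset V := (hlf x).toFinset with hNxdef
  set Ny : Finset V := (hlf y).toFinset with hNydef
  have hmemNx : ∀ u, u ∈ Nx ↔ G.Adj x u := fun u => by
    rw [hNxdef, Set.Finite.mem_toFinset]; rfl
  have hmemNy : ∀ u, u ∈ Ny ↔ G.Adj y u := fun u => by
    rw [hNydef, Set.Finite.mem_toFinset]; rfl
  have hcardNx : Nx.card = deg G x := by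
    rw [hNxdef, deg, Set.ncard_eq_toFinset_card _ (hlf x)]
  have hcardNy : Ny.card = deg G y := by
    rw [hNydef, deg, Set.ncard_eq_toFinset_card _ (hlf y)]
  have hyNx : y ∈ Nx := (hmemNx y).mpr hxy
  have hxNy : x ∈ Ny := (hmemNy x).mpr hxy.symm
  set Nx' : Finset V := Nx.erase y with hNx'def
  set Ny' : Finset V := Ny.erase x with hNy'def
  have hmemNx' : ∀ u, u ∈ Nx' → G.Adj x u ∧ u ≠ y ∧ u ≠ x := by
    intro u hu
    have h1 := Finset.mem_of_mem_erase hu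
    exact ⟨(hmemNx u).mp h1, Finset.ne_of_mem_erase hu, ((hmemNx u).mp h1).ne'⟩
  have hmemNy' : ∀ v, v ∈ Ny' → G.Adj y v ∧ v ≠ x ∧ v ≠ y := by
    intro v hv
    have h1 := Finset.mem_of_mem_erase hv
    exact ⟨(hmemNy v).mp h1, Finset.ne_of_mem_erase hv, ((hmemNy v).mp h1).ne'⟩
  have hxnotNx' : x ∉ Nx' := fun h => (hmemNx' x h).2.2 rfl
  have hynotNy' : y ∉ Ny' := fun h => (hmemNy' y h).2.2 rfl
  have hynotNx' : y ∉ Nx' := Finset.notMem_erase _ _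
  have hxnotNy' : x ∉ Ny' := Finset.notMem_erase _ _
  have hdx1 : 1 ≤ deg G x := by
    rw [← hcardNx]; exact Finset.card_pos.mpr ⟨y, hyNx⟩
  have hdy1 : 1 ≤ deg G y := by
    rw [← hcardNy]; exact Finset.card_pos.mpr ⟨x, hxNy⟩
  have hdxR : (0:ℝ) < (deg G x : ℝ) := by exact_mod_cast hdx1
  have hdyR : (0:ℝ) < (deg G y : ℝ) := by exact_mod_cast hdy1
  have hdxR1 : (1:ℝ) ≤ (deg G x : ℝ) := by exact_mod_cast hdx1
  have hdyR1 : (1:ℝ) ≤ (deg G y : ℝ) := by exact_mod_cast hdy1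
  have hdx0 : (deg G x : ℝ) ≠ 0 := ne_of_gt hdxR
  have hdy0 : (deg G y : ℝ) ≠ 0 := ne_of_gt hdyR
  have hcardNx' : (Nx'.card : ℝ) = (deg G x : ℝ) - 1 := by
    rw [hNx'def, Finset.card_erase_of_mem hyNx, hcardNx, Nat.cast_sub hdx1, Nat.cast_one]
  have hcardNy' : (Ny'.card : ℝ) = (deg G y : ℝ) - 1 := by
    rw [hNy'def, Finset.card_erase_of_mem hxNy, hcardNy, Nat.cast_sub hdy1, Nat.cast_one]
  -- consequences of no short cycles
  have noC3 : ∀ z, G.Adj x z → G.Adj y z → False := fun z h1 h2 =>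
    h3 (edgeInCycle3 hxy h2 h1.symm)
  have hadj_xv : ∀ v ∈ Ny', ¬ G.Adj x v := fun v hv h => noC3 v h (hmemNy' v hv).1
  have hadj_yu : ∀ u ∈ Nx', ¬ G.Adj y u := fun u hu h => noC3 u (hmemNx' u hu).1 h
  have hneuv : ∀ u ∈ Nx', ∀ v ∈ Ny', u ≠ v := by
    intro u hu v hv h
    subst h
    exact noC3 u (hmemNx' u hu).1 (hmemNy' u hv).1
  have noC4 : ∀ u ∈ Nx', ∀ v ∈ Ny', ¬ G.Adj u v := by
    intro u hu v hv h
    exact h4 (edgeInCycle4 hxy (hmemNy' v hv).1 h.symm ((hmemNx' u hu).1).symm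
      (Ne.symm (hmemNy' v hv).2.1) (Ne.symm (hmemNx' u hu).2.1))
  have noC5 : ∀ u ∈ Nx', ∀ v ∈ Ny', ∀ w, G.Adj u w → G.Adj w v → False := by
    intro u hu v hv w h1 h2
    by_cases hwx : w = x
    · exact hadj_xv v hv (hwx ▸ h2)
    by_cases hwy : w = y
    · exact hadj_yu u hu (hwy ▸ h1.symm)
    exact h5 (edgeInCycle5 hxy (hmemNy' v hv).1 h2.symm h1.symm ((hmemNx' u hu).1).symm
      (Ne.symm (hmemNy' v hv).2.1) (Ne.symm hwy) (Ne.symm (hneuv u hu v hv)) (Ne.symm hwx)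
      (Ne.symm (hmemNx' u hu).2.1))
  -- distances
  have dxy : G.dist x y = 1 := SimpleGraph.dist_eq_one_iff_adj.mpr hxy
  have dyv : ∀ v ∈ Ny', G.dist y v = 1 := fun v hv =>
    SimpleGraph.dist_eq_one_iff_adj.mpr (hmemNy' v hv).1
  have dxv : ∀ v ∈ Ny', G.dist x v = 2 := by
    intro v hv
    have hle : G.dist x v ≤ 2 := by
      have := SimpleGraph.dist_le
        (SimpleGraph.Walk.cons hxy (SimpleGraph.Walk.cons (hmemNy' v hv).1 SimpleGraph.Walk.nil))
      simpa using this
    have h0 : 0 < G.dist x v := hG.pos_dist_of_ne (Ne.symm (hmemNy' v hv).2.1)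
    have h1 : G.dist x v ≠ 1 := fun h => hadj_xv v hv (SimpleGraph.dist_eq_one_iff_adj.mp h)
    omega
  have duy : ∀ u ∈ Nx', G.dist u y = 2 := by
    intro u hu
    have hle : G.dist u y ≤ 2 := by
      have := SimpleGraph.dist_le
        (SimpleGraph.Walk.cons ((hmemNx' u hu).1).symm (SimpleGraph.Walk.cons hxy SimpleGraph.Walk.nil))
      simpa using this
    have h0 : 0 < G.dist u y := hG.pos_dist_of_ne (hmemNx' u hu).2.1
    have h1 : G.dist u y ≠ 1 := fun h =>
      hadj_yu u hu (SimpleGraph.dist_eq_one_iff_adj.mp h).symm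
    omega
  have duv : ∀ u ∈ Nx', ∀ v ∈ Ny', G.dist u v = 3 := by
    intro u hu v hv
    have hle : G.dist u v ≤ 3 := by
      have := SimpleGraph.dist_le
        (SimpleGraph.Walk.cons ((hmemNx' u hu).1).symm (SimpleGraph.Walk.cons hxy
          (SimpleGraph.Walk.cons (hmemNy' v hv).1 SimpleGraph.Walk.nil)))
      simpa using this
    have h0 : 0 < G.dist u v := hG.pos_dist_of_ne (hneuv u hu v hv)
    have h1 : G.dist u v ≠ 1 := fun h => noC4 u hu v hv (SimpleGraph.dist_eq_one_iff_adj.mp h)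
    have h2 : G.dist u v ≠ 2 := by
      intro h
      obtain ⟨w, hw1, hw2⟩ := exists_mid_of_dist_eq_two hG h
      exact noC5 u hu v hv w hw1 hw2
    omega
  -- the potential
  set f : V → ℝ := fdef G y Ny' with hfdef
  have hLip : ∀ z₁ z₂, f z₁ - f z₂ ≤ (G.dist z₁ z₂ : ℝ) := fdef_lip hG y Ny'
  have hfx : f x = 2 := by
    apply le_antisymm
    · have := fdef_le_base (G := G) y Ny' x
      rw [dxy] at this
      calc f x ≤ min 3 (1 + ((1:ℕ):ℝ)) := this
        _ = 2 := by norm_num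
    · apply le_fdef
      · rw [dxy]; norm_num
      · intro v hv; rw [dxv v hv]; norm_num
  have hfy : f y = 1 := by
    apply le_antisymm
    · have := fdef_le_base (G := G) y Ny' y
      rw [SimpleGraph.dist_self] at this
      calc f y ≤ min 3 (1 + ((0:ℕ):ℝ)) := this
        _ = 1 := by norm_num
    · apply le_fdef
      · rw [SimpleGraph.dist_self]; norm_num
      · intro v hv; rw [dyv v hv]; norm_num
  have hfu : ∀ u ∈ Nx', f u = 3 := by
    intro u hu
    apply le_antisymm
    · have := fdef_le_base (G := G) y Ny' u
      rw [duy u hu] at this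
      calc f u ≤ min 3 (1 + ((2:ℕ):ℝ)) := this
        _ = 3 := by norm_num
    · apply le_fdef
      · rw [duy u hu]; norm_num
      · intro v hv; rw [duv u hu v hv]; norm_num
  have hfv : ∀ v ∈ Ny', f v = 0 := by
    intro v hv
    apply le_antisymm
    · have := fdef_le_img (G := G) y hv v
      rw [SimpleGraph.dist_self] at this
      simpa using this
    · apply le_fdef
      · have : (0:ℝ) ≤ (G.dist v y : ℝ) := Nat.cast_nonneg _
        simp only [le_min_iff]
        constructor <;> linarith
      · intro v' hv'; positivity
  -- main computation for each α
  have key : ∀ α : ℝ, 2/3 < α → α < 1 →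
      W G (mu G α x) (mu G α y) = 1 - (1 - α) * k := by
    intro α hα1 hα2
    have h1α : 0 ≤ 1 - α := by linarith
    set a : ℝ := (1 - α) / (deg G x : ℝ) with ha
    set b : ℝ := (1 - α) / (deg G y : ℝ) with hb
    set c : ℝ := (1 - α) / ((deg G x : ℝ) * (deg G y : ℝ)) with hc
    set A : V → V → ℝ := fun u v =>
      if u = x ∧ v = x then b
      else if u = y ∧ v = y then a
      else if u = x ∧ v = y then α - b - ((deg G y : ℝ) - 1) * c
      else if (u = x ∨ u ∈ Nx') ∧ (v = y ∨ v ∈ Ny') then c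
      else 0 with hA
    -- mu evaluations
    have hmuxx : mu G α x x = α := by simp [mu]
    have hmuxy : mu G α x y = a := by simp [mu, hne', hxy, ha]
    have hmuxu : ∀ u ∈ Nx', mu G α x u = a := by
      intro u hu
      obtain ⟨hadj, -, hux⟩ := hmemNx' u hu
      simp [mu, hux, hadj, ha]
    have hmux0 : ∀ u, u ≠ x → ¬ G.Adj x u → mu G α x u = 0 := by
      intro u h1 h2; simp [mu, h1, h2]
    have hmuyy : mu G α y y = α := by simp [mu]
    have hmuyx : mu G α y x = b := by simp [mu, hne, hxy.symm, hb]
    have hmuyv : ∀ v ∈ Ny', mu G α y v = b := by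
      intro v hv
      obtain ⟨hadj, -, hvy⟩ := hmemNy' v hv
      simp [mu, hvy, hadj, hb]
    have hmuy0 : ∀ v, v ≠ y → ¬ G.Adj y v → mu G α y v = 0 := by
      intro v h1 h2; simp [mu, h1, h2]
    -- A evaluations
    have hAxx : A x x = b := by simp [hA]
    have hAyy : A y y = a := by simp [hA, hne']
    have hAxy : A x y = α - b - ((deg G y : ℝ) - 1) * c := by simp [hA, hne, hne']
    have hAxv : ∀ v ∈ Ny', A x v = c := by
      intro v hv
      obtain ⟨-, hvx, hvy⟩ := hmemNy' v hv
      simp [hA, hvx, hvy, hv]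
    have hAuy : ∀ u ∈ Nx', A u y = c := by
      intro u hu
      obtain ⟨-, huy, hux⟩ := hmemNx' u hu
      simp [hA, hux, huy, hu, hne']
    have hAuv : ∀ u ∈ Nx', ∀ v ∈ Ny', A u v = c := by
      intro u hu v hv
      obtain ⟨-, huy, hux⟩ := hmemNx' u hu
      obtain ⟨-, hvx, hvy⟩ := hmemNy' v hv
      simp [hA, hux, huy, hu, hv, hvx, hvy]
    have hAy0 : ∀ v, v ≠ y → A y v = 0 := by
      intro v hvy; simp [hA, hne', hynotNx', hvy]
    have hAux0 : ∀ u, u ≠ x → A u x = 0 := by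
      intro u hux; simp [hA, hux, hne, hxnotNy']
    have hA0row : ∀ u, u ≠ x → u ≠ y → u ∉ Nx' → ∀ v, A u v = 0 := by
      intro u hux huy hu v; simp [hA, hux, huy, hu]
    have hA0col : ∀ v, v ≠ x → v ≠ y → v ∉ Ny' → ∀ u, A u v = 0 := by
      intro v hvx hvy hv u; simp [hA, hvx, hvy, hv]
    -- nonnegativity
    have ha0 : 0 ≤ a := by rw [ha]; positivity
    have hb0 : 0 ≤ b := by rw [hb]; positivity
    have hc0 : 0 ≤ c := by rw [hc]; positivity
    have hb_le : b ≤ 1 - α := by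
      rw [hb]; exact div_le_self h1α hdyR1
    have hterm : ((deg G y : ℝ) - 1) * c ≤ 1 - α := by
      have hdd : c * ((deg G x : ℝ) * (deg G y : ℝ)) = 1 - α := by
        rw [hc]; field_simp
      nlinarith [mul_nonneg hc0 (sub_nonneg.mpr hdyR1), mul_nonneg hc0 (sub_nonneg.mpr hdxR1),
        mul_nonneg (mul_nonneg hc0 (sub_nonneg.mpr hdxR1)) (sub_nonneg.mpr hdyR1)]
    have hAxy0 : 0 ≤ α - b - ((deg G y : ℝ) - 1) * c := by linarith
    have hApos : ∀ u v, 0 ≤ A u v := by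
      intro u v
      rw [hA]
      dsimp only
      split_ifs
      · exact hb0
      · exact ha0
      · exact hAxy0
      · exact hc0
      · exact le_refl 0
    -- support
    have hsupp : ∀ u v, A u v ≠ 0 → u ∈ insert x Nx ∧ v ∈ insert y Ny := by
      intro u v h
      rw [hA] at h
      dsimp only at h
      split_ifs at h with h1 h2 h3 h4
      · exact ⟨by simp [h1.1], by simp [h1.2, hxNy]⟩
      · exact ⟨by simp [h2.1, hyNx], by simp [h2.2]⟩
      · exact ⟨by simp [h3.1], by simp [h3.2]⟩
      · constructor
        · rcases h4.1 with rfl | hu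
          · exact Finset.mem_insert_self _ _
          · exact Finset.mem_insert_of_mem (Finset.mem_of_mem_erase hu)
        · rcases h4.2 with rfl | hv
          · exact Finset.mem_insert_self _ _
          · exact Finset.mem_insert_of_mem (Finset.mem_of_mem_erase hv)
      · exact absurd rfl h
    have hfinA : (Function.support fun p : V × V => A p.1 p.2).Finite := by
      apply Set.Finite.subset (Finset.finite_toSet ((insert x Nx) ×ˢ (insert y Ny)))
      intro p hp
      have := hsupp p.1 p.2 hp
      simp only [Finset.coe_product, Set.mem_prod, Finset.mem_coe]
      exact this
    have hNyins : insert x Ny' = Ny := Finset.insert_erase hxNy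
    have hNxins : insert y Nx' = Nx := Finset.insert_erase hyNx
    have hynotins : y ∉ insert x Ny' := by
      simp [Finset.mem_insert, hne', hynotNy']
    have hxnotins : x ∉ insert y Nx' := by
      simp [Finset.mem_insert, hne, hxnotNx']
    have hsum_insert : ∀ g : V → ℝ,
        ∑ v ∈ insert y (insert x Ny'), g v = g y + g x + ∑ v ∈ Ny', g v := by
      intro g
      rw [Finset.sum_insert hynotins, Finset.sum_insert hxnotNy']
      ring
    have hsum_insert2 : ∀ g : V → ℝ,
        ∑ u ∈ insert x (insert y Nx'), g u = g x + g y + ∑ u ∈ Nx', g u := by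
      intro g
      rw [Finset.sum_insert hxnotins, Finset.sum_insert hynotNx']
      ring
    have hrowfin : ∀ u, ∑ᶠ v, A u v = ∑ v ∈ insert y (insert x Ny'), A u v := by
      intro u
      apply finsum_eq_sum_of_support_subset
      intro v hv
      have h := (hsupp u v hv).2
      rw [Finset.mem_coe, Finset.mem_insert, hNyins, ← Finset.mem_insert]
      exact h
    have hcolfin : ∀ v, ∑ᶠ u, A u v = ∑ u ∈ insert x (insert y Nx'), A u v := by
      intro v
      apply finsum_eq_sum_of_support_subset
      intro u hu
      have h := (hsupp u v hu).1
      rw [Finset.mem_coe, Finset.mem_insert, hNxins, ← Finset.mem_insert]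
      exact h
    -- row sums
    have hrow : ∀ u, ∑ᶠ v, A u v = mu G α x u := by
      intro u
      by_cases hu : u ∈ insert x Nx
      · rcases Finset.mem_insert.mp hu with rfl | hu2
        · have e : ∑ v ∈ Ny', A u v = ((deg G y : ℝ) - 1) * c := by
            rw [Finset.sum_congr rfl (fun v hv => hAxv v hv), Finset.sum_const,
              nsmul_eq_mul, hcardNy']
          rw [hrowfin, hsum_insert, hAxy, hAxx, e, hmuxx]
          ring
        · by_cases huy : u = y
          · have e : ∑ v ∈ Ny', A y v = 0 :=
              Finset.sum_eq_zero fun v hv => hAy0 v (hmemNy' v hv).2.2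
            rw [huy, hrowfin, hsum_insert, hAyy, hAy0 x hne, e, hmuxy]
            ring
          · have hu' : u ∈ Nx' := Finset.mem_erase.mpr ⟨huy, hu2⟩
            obtain ⟨hadj, -, hux⟩ := hmemNx' u hu'
            have e : ∑ v ∈ Ny', A u v = ((deg G y : ℝ) - 1) * c := by
              rw [Finset.sum_congr rfl (fun v hv => hAuv u hu' v hv), Finset.sum_const,
                nsmul_eq_mul, hcardNy']
            rw [hrowfin, hsum_insert, hAuy u hu', hAux0 u hux, e, hmuxu u hu']
            rw [ha, hc]
            field_simp
            ring
      · simp only [Finset.mem_insert, not_or] at hu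
        have hux := hu.1
        have huNx := hu.2
        have huy : u ≠ y := fun h => huNx (h ▸ hyNx)
        have hu' : u ∉ Nx' := fun h => huNx (Finset.mem_of_mem_erase h)
        have hnadj : ¬ G.Adj x u := fun h => huNx ((hmemNx u).mpr h)
        rw [hrowfin, Finset.sum_eq_zero fun v _ => hA0row u hux huy hu' v,
          hmux0 u hux hnadj]
    -- column sums
    have hcol : ∀ v, ∑ᶠ u, A u v = mu G α y v := by
      intro v
      by_cases hv : v ∈ insert y Ny
      · rcases Finset.mem_insert.mp hv with rfl | hv2
        · have e : ∑ u ∈ Nx', A u v = ((deg G x : ℝ) - 1) * c := by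
            rw [Finset.sum_congr rfl (fun u hu => hAuy u hu), Finset.sum_const,
              nsmul_eq_mul, hcardNx']
          rw [hcolfin, hsum_insert2, hAxy, hAyy, e, hmuyy]
          rw [ha, hb, hc]
          field_simp
          ring
        · by_cases hvx : v = x
          · have e : ∑ u ∈ Nx', A u x = 0 :=
              Finset.sum_eq_zero fun u hu => hAux0 u (hmemNx' u hu).2.2
            rw [hvx, hcolfin, hsum_insert2, hAxx, hAux0 y hne', e, hmuyx]
            ring
          · have hv' : v ∈ Ny' := Finset.mem_erase.mpr ⟨hvx, hv2⟩
            obtain ⟨hadj, -, hvy⟩ := hmemNy' v hv'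
            have e : ∑ u ∈ Nx', A u v = ((deg G x : ℝ) - 1) * c := by
              rw [Finset.sum_congr rfl (fun u hu => hAuv u hu v hv'), Finset.sum_const,
                nsmul_eq_mul, hcardNx']
            rw [hcolfin, hsum_insert2, hAxv v hv', hAy0 v hvy, e, hmuyv v hv']
            rw [hb, hc]
            field_simp
            ring
      · simp only [Finset.mem_insert, not_or] at hv
        have hvy := hv.1
        have hvNy := hv.2
        have hvx : v ≠ x := fun h => hvNy (h ▸ hxNy)
        have hv' : v ∉ Ny' := fun h => hvNy (Finset.mem_of_mem_erase h)
        have hnadj : ¬ G.Adj y v := fun h => hvNy ((hmemNy v).mpr h)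
        rw [hcolfin, Finset.sum_eq_zero fun u _ => hA0col v hvx hvy hv' u,
          hmuy0 v hvy hnadj]
    have hcoup : IsCoupling (mu G α x) (mu G α y) A := ⟨hApos, hfinA, hrow, hcol⟩
    -- cost of A
    have hpt : ∀ p : V × V, A p.1 p.2 * (G.dist p.1 p.2 : ℝ) = A p.1 p.2 * (f p.1 - f p.2) := by
      rintro ⟨u, v⟩
      by_cases h : A u v = 0
      · simp only [h, zero_mul]
      · congr 1
        rw [hA] at h
        dsimp only at h
        split_ifs at h with h1 h2 h3 h4
        · obtain ⟨rfl, rfl⟩ := h1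
          rw [SimpleGraph.dist_self]
          simp
        · obtain ⟨rfl, rfl⟩ := h2
          rw [SimpleGraph.dist_self]
          simp
        · obtain ⟨rfl, rfl⟩ := h3
          rw [dxy, hfx, hfy]
          norm_num
        · rcases h4.1 with rfl | hu <;> rcases h4.2 with rfl | hv
          · exact absurd ⟨rfl, rfl⟩ h3
          · rw [dxv v hv, hfx, hfv v hv]
            norm_num
          · rw [duy u hu, hfu u hu, hfy]
            norm_num
          · rw [duv u hu v hv, hfu u hu, hfv v hv]
            norm_num
        · exact absurd rfl h
    -- the two integrals of f
    have hF1 : ∑ᶠ u, mu G α x u * f u = 2*α + a + ((deg G x : ℝ) - 1) * (a * 3) := by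
      have hsub : ∑ᶠ u, mu G α x u * f u = ∑ u ∈ insert x (insert y Nx'), mu G α x u * f u := by
        apply finsum_eq_sum_of_support_subset
        intro u hu
        have hne0 : mu G α x u ≠ 0 := by
          intro h
          apply hu
          simp [Function.mem_support, h] at hu ⊢
        by_cases hux : u = x
        · subst hux; exact Finset.mem_coe.mpr (Finset.mem_insert_self _ _)
        · have hadj : G.Adj x u := by
            by_contra hnadj
            exact hne0 (hmux0 u hux hnadj)
          rw [Finset.mem_coe, Finset.mem_insert, hNxins]
          exact Or.inr ((hmemNx u).mpr hadj)
      rw [hsub, hsum_insert2, hmuxx, hmuxy, hfx, hfy]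
      have e : ∑ u ∈ Nx', mu G α x u * f u = ((deg G x : ℝ) - 1) * (a * 3) := by
        rw [Finset.sum_congr rfl (fun u hu => by rw [hmuxu u hu, hfu u hu]),
          Finset.sum_const, nsmul_eq_mul, hcardNx']
      rw [e]
      ring
    have hF2 : ∑ᶠ v, mu G α y v * f v = α + 2*b := by
      have hsub : ∑ᶠ v, mu G α y v * f v = ∑ v ∈ insert y (insert x Ny'), mu G α y v * f v := by
        apply finsum_eq_sum_of_support_subset
        intro v hv
        have hne0 : mu G α y v ≠ 0 := by
          intro h
          apply hv
          simp [Function.mem_support, h] at hv ⊢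
        by_cases hvy : v = y
        · subst hvy; exact Finset.mem_coe.mpr (Finset.mem_insert_self _ _)
        · have hadj : G.Adj y v := by
            by_contra hnadj
            exact hne0 (hmuy0 v hvy hnadj)
          rw [Finset.mem_coe, Finset.mem_insert, hNyins]
          exact Or.inr ((hmemNy v).mpr hadj)
      rw [hsub, hsum_insert, hmuyy, hmuyx, hfx, hfy]
      have e : ∑ v ∈ Ny', mu G α y v * f v = 0 :=
        Finset.sum_eq_zero fun v hv => by rw [hfv v hv, mul_zero]
      rw [e]
      ring
    have hT : (∑ᶠ u, mu G α x u * f u) - (∑ᶠ v, mu G α y v * f v) = 1 - (1 - α) * k := by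
      rw [hF1, hF2, hk, ha, hb]
      field_simp
      ring
    have hcost : cost G A = 1 - (1 - α) * k := by
      unfold cost
      calc ∑ᶠ p : V × V, A p.1 p.2 * (G.dist p.1 p.2 : ℝ)
          = ∑ᶠ p : V × V, A p.1 p.2 * (f p.1 - f p.2) := finsum_congr hpt
        _ = (∑ᶠ u, mu G α x u * f u) - (∑ᶠ v, mu G α y v * f v) :=
            coupling_sum_eq _ _ A hcoup f
        _ = 1 - (1 - α) * k := hT
    -- lower bound for any coupling
    have hlower : ∀ B : V → V → ℝ, IsCoupling (mu G α x) (mu G α y) B →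
        1 - (1 - α) * k ≤ cost G B := by
      intro B hB
      have hBfin := hB.2.1
      have h1 : cost G B = ∑ p ∈ hBfin.toFinset, B p.1 p.2 * (G.dist p.1 p.2 : ℝ) := by
        unfold cost
        apply finsum_eq_sum_of_support_subset
        intro p hp
        rw [Finset.mem_coe, Set.Finite.mem_toFinset]
        intro h
        apply hp
        simp [Function.mem_support, h] at hp ⊢
      have h2 : ∑ᶠ p : V × V, B p.1 p.2 * (f p.1 - f p.2)
          = ∑ p ∈ hBfin.toFinset, B p.1 p.2 * (f p.1 - f p.2) := by
        apply finsum_eq_sum_of_support_subset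
        intro p hp
        rw [Finset.mem_coe, Set.Finite.mem_toFinset]
        intro h
        apply hp
        simp [Function.mem_support, h] at hp ⊢
      have h3 : ∑ p ∈ hBfin.toFinset, B p.1 p.2 * (f p.1 - f p.2)
          ≤ ∑ p ∈ hBfin.toFinset, B p.1 p.2 * (G.dist p.1 p.2 : ℝ) :=
        Finset.sum_le_sum fun p _ => mul_le_mul_of_nonneg_left (hLip p.1 p.2) (hB.1 p.1 p.2)
      have h4 := coupling_sum_eq _ _ B hB f
      rw [h1]
      calc 1 - (1 - α) * k = (∑ᶠ u, mu G α x u * f u) - (∑ᶠ v, mu G α y v * f v) := hT.symm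
        _ = ∑ᶠ p : V × V, B p.1 p.2 * (f p.1 - f p.2) := h4.symm
        _ = ∑ p ∈ hBfin.toFinset, B p.1 p.2 * (f p.1 - f p.2) := h2
        _ ≤ _ := h3
    -- conclude
    have hmemS : (1 - (1 - α) * k) ∈
        {c : ℝ | ∃ A : V → V → ℝ, IsCoupling (mu G α x) (mu G α y) A ∧ c = cost G A} :=
      ⟨A, hcoup, hcost.symm⟩
    apply le_antisymm
    · apply csInf_le
      · exact ⟨1 - (1 - α) * k, by
          rintro cc ⟨B, hB, rfl⟩
          exact hlower B hB⟩
      · exact hmemS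
    · apply le_csInf ⟨_, hmemS⟩
      rintro cc ⟨B, hB, rfl⟩
      exact hlower B hB
  -- pass to the limit
  have heq : ∀ᶠ α in nhdsWithin (1:ℝ) (Set.Iio 1), kIdle G α x y / (1 - α) = k := by
    filter_upwards [Ioo_mem_nhdsLT_of_mem
      (show (1:ℝ) ∈ Set.Ioc (2/3 : ℝ) 1 by constructor <;> norm_num)] with α hα
    have hW := key α hα.1 hα.2
    have hne0 : (1:ℝ) - α ≠ 0 := sub_ne_zero.mpr (ne_of_gt hα.2)
    rw [kIdle, hW]
    field_simp
    ring
  show Filter.Tendsto _ _ _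
  have heq' : (fun α : ℝ => kIdle G α x y / (1 - α)) =ᶠ[nhdsWithin (1:ℝ) (Set.Iio 1)]
      (fun _ => k) := heq
  exact Filter.Tendsto.congr' heq'.symm tendsto_const_nhds

end RicciFlatPaper
end

section
/- Suppose an edge (x,y) of a locally finite simple graph G is not contained in any cycle of length 3 or 4. Then the Lin–Lu–Yau Ricci curvature satisfies k(x,y) ≤ 1/d(x) + 2/d(y) − 1. -/
open scoped BigOperators

namespace RicciFlatPaper
variable {V : Type*} {G : SimpleGraph V}

lemma edgeInCycle_three (G : SimpleGraph V) {x y w : V} (hxy : G.Adj x y)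
    (hyw : G.Adj y w) (hwx : G.Adj w x) : EdgeInCycle G 3 x y := by
  refine ⟨x, SimpleGraph.Walk.cons hxy (SimpleGraph.Walk.cons hyw (SimpleGraph.Walk.cons hwx SimpleGraph.Walk.nil)), ?_, by simp, by simp⟩
  rw [SimpleGraph.Walk.isCycle_def]
  refine ⟨?_, by simp, ?_⟩
  · rw [SimpleGraph.Walk.isTrail_def]
    simp [hxy.ne, hyw.ne, hwx.ne, Sym2.eq, Sym2.rel_iff', hxy.ne', hyw.ne', hwx.ne']
  · simp [hxy.ne, hyw.ne, hwx.ne, hxy.ne', hyw.ne', hwx.ne']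

lemma edgeInCycle_four (G : SimpleGraph V) {x y w z : V} (hxy : G.Adj x y)
    (hyw : G.Adj y w) (hwz : G.Adj w z) (hzx : G.Adj z x)
    (hxw : x ≠ w) (hyz : y ≠ z) : EdgeInCycle G 4 x y := by
  refine ⟨x, SimpleGraph.Walk.cons hxy (SimpleGraph.Walk.cons hyw (SimpleGraph.Walk.cons hwz (SimpleGraph.Walk.cons hzx SimpleGraph.Walk.nil))), ?_, by simp, by simp⟩
  rw [SimpleGraph.Walk.isCycle_def]
  refine ⟨?_, by simp, ?_⟩
  · rw [SimpleGraph.Walk.isTrail_def]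
    simp [hxy.ne, hyw.ne, hwz.ne, hzx.ne, Sym2.eq, Sym2.rel_iff', hxy.ne', hyw.ne', hwz.ne', hzx.ne', hxw, hyz]
    aesop
  · simp [hxy.ne, hyw.ne, hwz.ne, hzx.ne, hxy.ne', hyw.ne', hwz.ne', hzx.ne', hxw, hyz]
    aesop

open Classical in
noncomputable def fF (G : SimpleGraph V) (x y : V) : V → ℝ :=
  fun v => if G.Adj y v ∧ v ≠ x then 2
           else if v = y ∨ ∃ w, G.Adj y w ∧ w ≠ x ∧ G.Adj v w then 1 else 0

section fFlemmas
variable {x y : V}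

lemma fF_nonneg (v : V) : 0 ≤ fF G x y v := by
  unfold fF; split_ifs <;> norm_num

lemma fF_le_two (v : V) : fF G x y v ≤ 2 := by
  unfold fF; split_ifs <;> norm_num

lemma fF_y : fF G x y y = 1 := by
  unfold fF
  rw [if_neg (by simp), if_pos (Or.inl rfl)]

lemma no_common (hxy : G.Adj x y) (h3 : ¬ EdgeInCycle G 3 x y) {w : V} (hw : G.Adj x w) :
    ¬ G.Adj y w :=
  fun hyw => h3 (edgeInCycle_three G hxy hyw hw.symm)

lemma fF_x (hxy : G.Adj x y) (h3 : ¬ EdgeInCycle G 3 x y) : fF G x y x = 0 := by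
  unfold fF
  rw [if_neg (by simp), if_neg]
  rintro (h | ⟨w, hw1, hw2, hw3⟩)
  · exact hxy.ne' (h ▸ rfl)
  · exact no_common hxy h3 hw3 hw1

lemma fF_nbrx (hxy : G.Adj x y) (h3 : ¬ EdgeInCycle G 3 x y) (h4 : ¬ EdgeInCycle G 4 x y)
    {z : V} (hz : G.Adj x z) (hzy : z ≠ y) : fF G x y z = 0 := by
  unfold fF
  rw [if_neg (fun h => no_common hxy h3 hz h.1), if_neg]
  rintro (h | ⟨w, hw1, hw2, hw3⟩)
  · exact hzy h
  · exact h4 (edgeInCycle_four G hxy hw1 hw3.symm hz.symm (fun h => hw2 h.symm) hzy.symm)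

lemma fF_nbry {w : V} (hw : G.Adj y w) (hwx : w ≠ x) : fF G x y w = 2 := by
  unfold fF; rw [if_pos ⟨hw, hwx⟩]

lemma fF_step {u v : V} (h : G.Adj u v) : fF G x y u - fF G x y v ≤ 1 := by
  by_cases h2 : G.Adj y u ∧ u ≠ x
  · have : fF G x y v = 2 ∨ fF G x y v = 1 := by
      unfold fF
      split_ifs with ha hb
      · exact Or.inl rfl
      · exact Or.inr rfl
      · exact absurd (Or.inr ⟨u, h2.1, h2.2, h.symm⟩) hb
    have hu : fF G x y u ≤ 2 := fF_le_two u
    rcases this with hv | hv <;> rw [hv] <;> linarith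
  · have hu : fF G x y u ≤ 1 := by
      unfold fF; rw [if_neg h2]; split_ifs <;> norm_num
    have hv : 0 ≤ fF G x y v := fF_nonneg v
    linarith

lemma fF_lip (hG : G.Connected) : Lip1 G (fF G x y) := by
  intro u v
  obtain ⟨p, hp⟩ := hG.exists_walk_length_eq_dist u v
  rw [← hp]
  clear hp
  induction p with
  | nil => simp
  | cons h q ih =>
    have := fF_step (x := x) (y := y) h
    simp only [SimpleGraph.Walk.length_cons]
    push_cast
    linarith

end fFlemmas
end RicciFlatPaper


namespace RicciFlatPaper
variable {V : Type*} {G : SimpleGraph V}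

lemma mu_self (α : ℝ) (x : V) : mu G α x x = α := by
  unfold mu; simp

lemma mu_adj (α : ℝ) {x z : V} (h : G.Adj x z) :
    mu G α x z = (1 - α) / (deg G x : ℝ) := by
  unfold mu; rw [if_neg h.ne', if_pos h]

lemma mu_support_subset (α : ℝ) (x : V) :
    Function.support (mu G α x) ⊆ insert x (G.neighborSet x) := by
  intro v hv
  unfold mu Function.support at hv
  simp only [Set.mem_setOf_eq] at hv
  by_cases h1 : v = x
  · exact Or.inl h1
  · rw [if_neg h1] at hv
    by_cases h2 : G.Adj x v
    · exact Or.inr h2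
    · rw [if_neg h2] at hv; exact absurd rfl hv

lemma finsum_mu_mul_s4 (hlf : LocFin G) (α : ℝ) (x : V) (g : V → ℝ) :
    ∑ᶠ v, mu G α x v * g v
      = α * g x + ((1 - α) / (deg G x : ℝ)) * ∑ z ∈ (hlf x).toFinset, g z := by
  classical
  have hxnot : x ∉ (hlf x).toFinset := fun h => G.irrefl ((hlf x).mem_toFinset.mp h)
  have hsub : Function.support (fun v => mu G α x v * g v)
      ⊆ (insert x (hlf x).toFinset : Finset V) := by
    intro v hv
    have : v ∈ Function.support (mu G α x) := by
      intro h
      apply hv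
      simp [h]
    have := mu_support_subset α x this
    simp only [Finset.coe_insert, Set.mem_insert_iff, Set.Finite.coe_toFinset]
    exact this
  rw [finsum_eq_finset_sum_of_support_subset _ hsub, Finset.sum_insert hxnot, mu_self,
    Finset.mul_sum]
  congr 1
  apply Finset.sum_congr rfl
  intro z hz
  rw [Set.Finite.mem_toFinset] at hz
  rw [mu_adj α hz]

lemma deg_pos {x y : V} (hlf : LocFin G) (hxy : G.Adj x y) : 0 < deg G x := by
  have : (G.neighborSet x).Nonempty := ⟨y, hxy⟩
  exact Set.ncard_pos (hlf x) |>.mpr this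

lemma card_nbr (hlf : LocFin G) (x : V) : (hlf x).toFinset.card = deg G x :=
  (Set.ncard_eq_toFinset_card _ (hlf x)).symm

lemma mu_isProbDist {x y : V} (hlf : LocFin G) (hxy : G.Adj x y) {α : ℝ}
    (h0 : 0 ≤ α) (h1 : α ≤ 1) : IsProbDist (mu G α x) := by
  have hd : 0 < (deg G x : ℝ) := by exact_mod_cast deg_pos hlf hxy
  refine ⟨?_, ?_, ?_⟩
  · intro v
    unfold mu
    split_ifs with ha hb
    · exact h0
    · have : 0 ≤ 1 - α := by linarith
      positivity
    · exact le_refl 0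
  · exact ((hlf x).insert x).subset (mu_support_subset α x)
  · have h2 := finsum_mu_mul_s4 hlf α x (fun _ => 1)
    rw [Finset.sum_const, card_nbr hlf x] at h2
    simp only [mul_one, nsmul_eq_mul] at h2
    rw [h2]
    field_simp
    ring

end RicciFlatPaper


namespace RicciFlatPaper
variable {V : Type*} {G : SimpleGraph V}

lemma prod_isCoupling {μ₁ μ₂ : V → ℝ} (h₁ : IsProbDist μ₁) (h₂ : IsProbDist μ₂) :
    IsCoupling μ₁ μ₂ (fun u v => μ₁ u * μ₂ v) := by
  obtain ⟨h1n, h1f, h1s⟩ := h₁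
  obtain ⟨h2n, h2f, h2s⟩ := h₂
  refine ⟨fun u v => mul_nonneg (h1n u) (h2n v), ?_, ?_, ?_⟩
  · apply (h1f.prod h2f).subset
    intro p hp
    simp only [Function.mem_support] at hp
    exact Set.mem_prod.mpr ⟨left_ne_zero_of_mul hp, right_ne_zero_of_mul hp⟩
  · intro u
    rw [← mul_finsum _ _, h2s, mul_one]
  · intro v
    rw [← finsum_mul _ _, h1s, one_mul]

lemma cost_ge_of_lip (G : SimpleGraph V) {f : V → ℝ} (hf : Lip1 G f)
    {μ₁ μ₂ : V → ℝ} {A : V → V → ℝ} (hA : IsCoupling μ₁ μ₂ A) :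
    (∑ᶠ v, μ₂ v * f v) - (∑ᶠ v, μ₁ v * f v) ≤ cost G A := by
  classical
  obtain ⟨hpos, hfin, hm1, hm2⟩ := hA
  set S : Finset (V × V) := hfin.toFinset with hS
  have hmemS : ∀ p : V × V, A p.1 p.2 ≠ 0 → p ∈ S := by
    intro p hp
    exact hfin.mem_toFinset.mpr hp
  set S1 := S.image Prod.fst with hS1
  set S2 := S.image Prod.snd with hS2
  have hsubT : S ⊆ S1 ×ˢ S2 := by
    intro p hp
    rw [Finset.mem_product]
    exact ⟨Finset.mem_image_of_mem _ hp, Finset.mem_image_of_mem _ hp⟩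
  have hcost : cost G A = ∑ p ∈ S1 ×ˢ S2, A p.1 p.2 * (G.dist p.1 p.2 : ℝ) := by
    rw [cost]
    apply finsum_eq_finset_sum_of_support_subset
    intro p hp
    simp only [Function.mem_support] at hp
    have : A p.1 p.2 ≠ 0 := fun h => hp (by rw [h]; ring)
    exact Finset.mem_coe.mpr (hsubT (hmemS p this))
  have hmarg2 : ∀ v ∈ S2, ∑ u ∈ S1, A u v = μ₂ v := by
    intro v _
    rw [← hm2 v]
    symm
    apply finsum_eq_finset_sum_of_support_subset
    intro u hu
    simp only [Function.mem_support] at hu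
    exact Finset.mem_coe.mpr (Finset.mem_image_of_mem Prod.fst (hmemS (u, v) hu))
  have hmarg1 : ∀ u ∈ S1, ∑ v ∈ S2, A u v = μ₁ u := by
    intro u _
    rw [← hm1 u]
    symm
    apply finsum_eq_finset_sum_of_support_subset
    intro v hv
    simp only [Function.mem_support] at hv
    exact Finset.mem_coe.mpr (Finset.mem_image_of_mem Prod.snd (hmemS (u, v) hv))
  have hsup2 : ∑ᶠ v, μ₂ v * f v = ∑ v ∈ S2, μ₂ v * f v := by
    apply finsum_eq_finset_sum_of_support_subset
    intro v hv
    simp only [Function.mem_support] at hv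
    have hv2 : μ₂ v ≠ 0 := left_ne_zero_of_mul hv
    rw [← hm2 v] at hv2
    obtain ⟨u, hu⟩ : ∃ u, A u v ≠ 0 := by
      by_contra h
      push_neg at h
      exact hv2 (finsum_eq_zero_of_forall_eq_zero h)
    exact Finset.mem_coe.mpr (Finset.mem_image_of_mem Prod.snd (hmemS (u, v) hu))
  have hsup1 : ∑ᶠ v, μ₁ v * f v = ∑ u ∈ S1, μ₁ u * f u := by
    apply finsum_eq_finset_sum_of_support_subset
    intro u hu
    simp only [Function.mem_support] at hu
    have hu2 : μ₁ u ≠ 0 := left_ne_zero_of_mul hu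
    rw [← hm1 u] at hu2
    obtain ⟨v, hv⟩ : ∃ v, A u v ≠ 0 := by
      by_contra h
      push_neg at h
      exact hu2 (finsum_eq_zero_of_forall_eq_zero h)
    exact Finset.mem_coe.mpr (Finset.mem_image_of_mem Prod.fst (hmemS (u, v) hv))
  have key2 : ∑ v ∈ S2, μ₂ v * f v = ∑ p ∈ S1 ×ˢ S2, A p.1 p.2 * f p.2 := by
    rw [show ∑ p ∈ S1 ×ˢ S2, A p.1 p.2 * f p.2 = ∑ u ∈ S1, ∑ v ∈ S2, A u v * f v from Finset.sum_product _ _ _, Finset.sum_comm]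
    apply Finset.sum_congr rfl
    intro v hv
    rw [← hmarg2 v hv, Finset.sum_mul]
  have key1 : ∑ u ∈ S1, μ₁ u * f u = ∑ p ∈ S1 ×ˢ S2, A p.1 p.2 * f p.1 := by
    rw [show ∑ p ∈ S1 ×ˢ S2, A p.1 p.2 * f p.1 = ∑ u ∈ S1, ∑ v ∈ S2, A u v * f u from Finset.sum_product _ _ _]
    apply Finset.sum_congr rfl
    intro u hu
    rw [← hmarg1 u hu, Finset.sum_mul]
  rw [hsup1, hsup2, key1, key2, hcost, ← Finset.sum_sub_distrib]
  apply Finset.sum_le_sum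
  intro p _
  have h1 : f p.2 - f p.1 ≤ (G.dist p.1 p.2 : ℝ) := by
    rw [SimpleGraph.dist_comm]
    exact hf p.2 p.1
  have h2 : 0 ≤ A p.1 p.2 := hpos p.1 p.2
  nlinarith

lemma W_ge (G : SimpleGraph V) {f : V → ℝ} (hf : Lip1 G f) {μ₁ μ₂ : V → ℝ}
    (h₁ : IsProbDist μ₁) (h₂ : IsProbDist μ₂) :
    (∑ᶠ v, μ₂ v * f v) - (∑ᶠ v, μ₁ v * f v) ≤ W G μ₁ μ₂ := by
  apply le_csInf
  · exact ⟨cost G (fun u v => μ₁ u * μ₂ v), (fun u v => μ₁ u * μ₂ v),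
      prod_isCoupling h₁ h₂, rfl⟩
  · rintro c ⟨A, hA, rfl⟩
    exact cost_ge_of_lip G hf hA

end RicciFlatPaper

namespace RicciFlatPaper

variable {V : Type*}

/-- if an edge is in no `C₃` or `C₄`, then
`k(x,y) ≤ 1/d(x) + 2/d(y) - 1`. -/
theorem curvature_bound_of_edge_no_C3_C4 (G : SimpleGraph V) (hG : G.Connected) (hlf : LocFin G)
    (x y : V) (hxy : G.Adj x y)
    (h3 : ¬ EdgeInCycle G 3 x y) (h4 : ¬ EdgeInCycle G 4 x y) :
    ∀ k : ℝ, HasRicci G x y k → k ≤ 1 / (deg G x : ℝ) + 2 / (deg G y : ℝ) - 1 := by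
  intro k hk
  classical
  have hdx : 0 < (deg G x : ℝ) := by exact_mod_cast deg_pos hlf hxy
  have hdy : 0 < (deg G y : ℝ) := by exact_mod_cast deg_pos hlf hxy.symm
  have key : ∀ α ∈ Set.Ioo (0:ℝ) 1,
      kIdle G α x y / (1 - α) ≤ 1 / (deg G x : ℝ) + 2 / (deg G y : ℝ) - 1 := by
    intro α hα
    obtain ⟨hα0, hα1⟩ := hα
    have h1α : 0 < 1 - α := by linarith
    have hsumx : ∑ z ∈ (hlf x).toFinset, fF G x y z = 1 := by
      have hz : ∀ z ∈ (hlf x).toFinset, fF G x y z = if z = y then 1 else 0 := by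
        intro z hz
        rw [Set.Finite.mem_toFinset] at hz
        by_cases h : z = y
        · rw [if_pos h, h, fF_y]
        · rw [if_neg h, fF_nbrx hxy h3 h4 hz h]
      rw [Finset.sum_congr rfl hz, Finset.sum_ite_eq' _ y (fun _ => (1:ℝ)),
        if_pos ((hlf x).mem_toFinset.mpr hxy)]
    have hsumy : ∑ w ∈ (hlf y).toFinset, fF G x y w = 2 * (deg G y : ℝ) - 2 := by
      have hw : ∀ w ∈ (hlf y).toFinset, fF G x y w = 2 - (if w = x then 2 else 0) := by
        intro w hw
        rw [Set.Finite.mem_toFinset] at hw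
        by_cases h : w = x
        · rw [if_pos h, h, fF_x hxy h3]; ring
        · rw [if_neg h, fF_nbry hw h]; ring
      rw [Finset.sum_congr rfl hw, Finset.sum_sub_distrib, Finset.sum_const,
        Finset.sum_ite_eq' _ x (fun _ => (2:ℝ)), if_pos ((hlf y).mem_toFinset.mpr hxy.symm),
        card_nbr hlf y]
      simp only [nsmul_eq_mul]
      ring
    have hIx : ∑ᶠ v, mu G α x v * fF G x y v = (1 - α) / (deg G x : ℝ) := by
      rw [finsum_mu_mul_s4 hlf, hsumx, fF_x hxy h3]; ring
    have hIy : ∑ᶠ v, mu G α y v * fF G x y v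
        = α + (1 - α) / (deg G y : ℝ) * (2 * (deg G y : ℝ) - 2) := by
      rw [finsum_mu_mul_s4 hlf, hsumy, fF_y]; ring
    have hW := W_ge G (fF_lip (x := x) (y := y) hG)
        (mu_isProbDist hlf hxy (le_of_lt hα0) (le_of_lt hα1))
        (mu_isProbDist hlf hxy.symm (le_of_lt hα0) (le_of_lt hα1))
    rw [hIx, hIy] at hW
    rw [kIdle, div_le_iff₀ h1α]
    have hy2 : (1 - α) / (deg G y : ℝ) * (2 * (deg G y : ℝ) - 2)
        = (1 - α) * 2 - (1 - α) * 2 / (deg G y : ℝ) := by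
      field_simp
    rw [hy2] at hW
    have e1 : (1 / (deg G x : ℝ) + 2 / (deg G y : ℝ) - 1) * (1 - α)
        = (1 - α) / (deg G x : ℝ) + (1 - α) * 2 / (deg G y : ℝ) - (1 - α) := by
      field_simp
    linarith
  refine le_of_tendsto hk ?_
  exact Filter.eventually_of_mem
    (Ioo_mem_nhdsLT_of_mem (by constructor <;> norm_num)) key

end RicciFlatPaper
end

section
/- Let G be a Ricci-flat graph (Lin–Lu–Yau curvature zero on every edge) containing an edge (x,y) with d(x) = d(y) = 2. Then (x,y) is not contained in any cycle of length 3, 4, or 5. -/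
open scoped BigOperators

namespace RicciFlatPaper

variable {V : Type*}

open SimpleGraph Walk in
lemma path_cons_of_edge {G : SimpleGraph V} {x y c : V} (q : G.Walk x c) (hq : q.IsPath)
    (he : s(x,y) ∈ q.edges) : ∃ (h : G.Adj x y) (q' : G.Walk y c), q = Walk.cons h q' := by
  cases q with
  | nil => simp at he
  | cons h' q' =>
    rename_i d
    rw [Walk.edges_cons, List.mem_cons] at he
    rcases he with he | he
    · have : y = d := by
        rw [Sym2.eq_iff] at he
        rcases he with ⟨-, h1⟩ | ⟨h1, -⟩
        · exact h1
        · exact absurd h1 h'.ne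
      subst this
      exact ⟨h', q', rfl⟩
    · exfalso
      have hx : x ∈ q'.support := Walk.fst_mem_support_of_mem_edges q' he
      rw [Walk.cons_isPath_iff] at hq
      exact hq.2 hx

open SimpleGraph Walk in
lemma exists_path_of_edgeInCycle {G : SimpleGraph V} {x y : V} {n : ℕ}
    (h : EdgeInCycle G n x y) : ∃ p : G.Walk y x, p.IsPath ∧ p.length + 1 = n := by
  classical
  obtain ⟨u, w, hc, hl, he⟩ := h
  have hx : x ∈ w.support := Walk.fst_mem_support_of_mem_edges w he
  have hc' : (w.rotate x hx).IsCycle := hc.rotate hx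
  have he' : s(x,y) ∈ (w.rotate x hx).edges := (w.rotate_edges x hx).mem_iff.mpr he
  have hl' : (w.rotate x hx).length = n := by
    rw [← Walk.length_edges, (w.rotate_edges x hx).perm.length_eq, Walk.length_edges, hl]
  set w' := w.rotate x hx with hw'
  clear_value w'
  cases w' with
  | nil => simp at he'
  | cons h₁ p =>
    rename_i b
    have hp : p.IsPath := ((Walk.cons_isCycle_iff p h₁).mp hc').1
    rw [Walk.edges_cons, List.mem_cons] at he'
    rcases he' with he' | he'
    · have : y = b := by
        rw [Sym2.eq_iff] at he'
        rcases he' with ⟨-, h1⟩ | ⟨h1, -⟩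
        · exact h1
        · exact absurd h1 h₁.ne
      subst this
      refine ⟨p, hp, ?_⟩
      simpa using hl'
    · have he'' : s(x,y) ∈ p.reverse.edges := by
        rw [Walk.edges_reverse, List.mem_reverse]; exact he'
      obtain ⟨h₂, q, hq⟩ := path_cons_of_edge p.reverse (hp.reverse) he''
      have hqpath : q.IsPath ∧ x ∉ q.support := by
        have := hp.reverse
        rw [hq, Walk.cons_isPath_iff] at this
        exact this
      refine ⟨(Walk.cons h₁ q.reverse).reverse, ?_, ?_⟩
      · rw [Walk.isPath_reverse_iff, Walk.cons_isPath_iff]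
        refine ⟨hqpath.1.reverse, ?_⟩
        rw [Walk.support_reverse, List.mem_reverse]
        exact hqpath.2
      · have hq1 : q.length + 1 = p.length := by
          have : p.reverse.length = p.length := Walk.length_reverse p
          rw [hq, Walk.length_cons] at this
          omega
        have hl'' : p.length + 1 = n := by simpa using hl'
        simp only [Walk.length_reverse, Walk.length_cons]
        omega

lemma nbhd_eq {G : SimpleGraph V} {v a b : V} (hfin : (G.neighborSet v).Finite)
    (hd : deg G v = 2) (ha : G.Adj v a) (hb : G.Adj v b) (hab : a ≠ b) :
    G.neighborSet v = {a, b} := by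
  refine (Set.eq_of_subset_of_ncard_le ?_ ?_ hfin).symm
  · intro w hw
    rcases hw with rfl | hw
    · exact ha
    · rw [Set.mem_singleton_iff] at hw; subst hw; exact hb
  · rw [Set.ncard_pair hab]; exact hd.le

set_option maxHeartbeats 1000000 in
lemma key_lemma (G : SimpleGraph V) {x y x' y' : V} (hxy : G.Adj x y)
    (hdx : deg G x = 2) (hdy : deg G y = 2)
    (hNx : G.neighborSet x = {y, x'}) (hNy : G.neighborSet y = {x, y'})
    (hx'y : x' ≠ y) (hy'x : y' ≠ x)
    (hdist : G.dist x' y' ≤ 2)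
    (hflat : HasRicci G x y 0) : False := by
  classical
  have hxx' : G.Adj x x' := by
    have : x' ∈ G.neighborSet x := by rw [hNx]; right; rfl
    exact this
  have hyy' : G.Adj y y' := by
    have : y' ∈ G.neighborSet y := by rw [hNy]; right; rfl
    exact this
  have hxny : x ≠ y := hxy.ne
  have hynx : y ≠ x := hxny.symm
  have hx'x : x' ≠ x := hxx'.ne'
  have hy'y : y' ≠ y := hyy'.ne'
  have hdeg : ((deg G x : ℕ) : ℝ) = 2 := by rw [hdx]; norm_num
  have hdegy : ((deg G y : ℕ) : ℝ) = 2 := by rw [hdy]; norm_num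
  set d : ℝ := (G.dist x' y' : ℝ) with hd
  have hd0 : (0:ℝ) ≤ d := by positivity
  have hd2 : d ≤ 2 := by rw [hd]; exact_mod_cast hdist
  have hbound : ∀ α : ℝ, α ∈ Set.Ioo (1/3 : ℝ) 1 → (3 - d)/2 ≤ kIdle G α x y / (1 - α) := by
    intro α hα
    obtain ⟨hα1, hα2⟩ := hα
    have h1α : (0:ℝ) < 1 - α := by linarith
    have hmuxx : mu G α x x = α := by simp [mu]
    have hmuxy : mu G α x y = (1-α)/2 := by simp [mu, hynx, hxy, hdeg]
    have hmuxx' : mu G α x x' = (1-α)/2 := by simp [mu, hx'x, hxx', hdeg]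
    have hmuyy : mu G α y y = α := by simp [mu]
    have hmuyx : mu G α y x = (1-α)/2 := by simp [mu, hxny, hxy.symm, hdegy]
    have hmuyy' : mu G α y y' = (1-α)/2 := by simp [mu, hy'y, hyy', hdegy]
    set A : V → V → ℝ := fun u v =>
      if u = x ∧ v = x then (1-α)/2
      else if u = x ∧ v = y then (3*α-1)/2
      else if u = y ∧ v = y then (1-α)/2
      else if u = x' ∧ v = y' then (1-α)/2
      else 0 with hA
    have hAnn : ∀ u v, 0 ≤ A u v := by
      intro u v
      simp only [hA]
      split_ifs <;> linarith
    have hAsupp : ∀ u v, A u v ≠ 0 →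
        (u = x ∧ v = x) ∨ (u = x ∧ v = y) ∨ (u = y ∧ v = y) ∨ (u = x' ∧ v = y') := by
      intro u v huv
      simp only [hA] at huv
      split_ifs at huv <;> tauto
    -- evaluations
    have hAxx : A x x = (1-α)/2 := by simp [hA]
    have hAxy : A x y = (3*α-1)/2 := by simp [hA, hynx]
    have hAyy : A y y = (1-α)/2 := by simp [hA, hxny, hynx]
    have hAx'y' : A x' y' = (1-α)/2 := by simp [hA, hx'x, hx'y, hy'y]
    -- row sums
    have hrow : ∀ u, ∑ᶠ v, A u v = mu G α x u := by
      intro u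
      by_cases hux : u = x
      · rw [hux]
        rw [finsum_eq_sum_of_support_subset (fun v => A x v) (s := {x, y})
          (by
            intro v hv
            have := hAsupp _ _ hv
            simp only [Finset.coe_insert, Finset.coe_singleton, Set.mem_insert_iff,
              Set.mem_singleton_iff]
            rcases this with ⟨-, h⟩ | ⟨-, h⟩ | ⟨h, -⟩ | ⟨h, -⟩
            · left; exact h
            · right; exact h
            · exact absurd h hxny
            · exact absurd h hx'x.symm)]
        rw [Finset.sum_pair hxny]
        rw [hAxx, hAxy, hmuxx]
        ring
      · by_cases huy : u = y
        · rw [huy]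
          rw [finsum_eq_sum_of_support_subset (fun v => A y v) (s := {y})
            (by
              intro v hv
              have := hAsupp _ _ hv
              simp only [Finset.coe_singleton, Set.mem_singleton_iff]
              rcases this with ⟨h, -⟩ | ⟨h, -⟩ | ⟨-, h⟩ | ⟨h, -⟩
              · exact absurd h hynx
              · exact absurd h hynx
              · exact h
              · exact absurd h hx'y.symm)]
          rw [Finset.sum_singleton, hAyy, hmuxy]
        · by_cases hux' : u = x'
          · rw [hux']
            rw [finsum_eq_sum_of_support_subset (fun v => A x' v) (s := {y'})
              (by
                intro v hv
                have := hAsupp _ _ hv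
                simp only [Finset.coe_singleton, Set.mem_singleton_iff]
                rcases this with ⟨h, -⟩ | ⟨h, -⟩ | ⟨h, -⟩ | ⟨-, h⟩
                · exact absurd h hx'x
                · exact absurd h hx'x
                · exact absurd h hx'y
                · exact h)]
            rw [Finset.sum_singleton, hAx'y', hmuxx']
          · have hz : ∀ v, A u v = 0 := by
              intro v
              by_contra h
              rcases hAsupp u v h with ⟨h', -⟩ | ⟨h', -⟩ | ⟨h', -⟩ | ⟨h', -⟩ <;>
                [exact hux h'; exact hux h'; exact huy h'; exact hux' h']
            rw [finsum_eq_zero_of_forall_eq_zero hz]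
            have hadj : ¬ G.Adj x u := by
              intro hadj
              have : u ∈ G.neighborSet x := hadj
              rw [hNx] at this
              rcases this with rfl | h
              · exact huy rfl
              · rw [Set.mem_singleton_iff] at h; exact hux' h
            simp [mu, hux, hadj]
    -- column sums
    have hcol : ∀ v, ∑ᶠ u, A u v = mu G α y v := by
      intro v
      by_cases hvy : v = y
      · rw [hvy]
        rw [finsum_eq_sum_of_support_subset (fun u => A u y) (s := {x, y})
          (by
            intro u hu
            have := hAsupp _ _ hu
            simp only [Finset.coe_insert, Finset.coe_singleton, Set.mem_insert_iff,
              Set.mem_singleton_iff]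
            rcases this with ⟨h, h'⟩ | ⟨h, -⟩ | ⟨h, -⟩ | ⟨-, h⟩
            · exact absurd h'.symm hxny
            · left; exact h
            · right; exact h
            · exact absurd h (Ne.symm hy'y))]
        rw [Finset.sum_pair hxny]
        rw [hAxy, hAyy, hmuyy]
        ring
      · by_cases hvx : v = x
        · rw [hvx]
          rw [finsum_eq_sum_of_support_subset (fun u => A u x) (s := {x})
            (by
              intro u hu
              have := hAsupp _ _ hu
              simp only [Finset.coe_singleton, Set.mem_singleton_iff]
              rcases this with ⟨h, -⟩ | ⟨-, h⟩ | ⟨-, h⟩ | ⟨-, h⟩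
              · exact h
              · exact absurd h hxny
              · exact absurd h hxny
              · exact absurd h (Ne.symm hy'x))]
          rw [Finset.sum_singleton, hAxx, hmuyx]
        · by_cases hvy' : v = y'
          · rw [hvy']
            rw [finsum_eq_sum_of_support_subset (fun u => A u y') (s := {x'})
              (by
                intro u hu
                have := hAsupp _ _ hu
                simp only [Finset.coe_singleton, Set.mem_singleton_iff]
                rcases this with ⟨-, h⟩ | ⟨-, h⟩ | ⟨-, h⟩ | ⟨h, -⟩
                · exact absurd h hy'x
                · exact absurd h hy'y
                · exact absurd h hy'y
                · exact h)]
            rw [Finset.sum_singleton, hAx'y', hmuyy']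
          · have hz : ∀ u, A u v = 0 := by
              intro u
              by_contra h
              rcases hAsupp u v h with ⟨-, h'⟩ | ⟨-, h'⟩ | ⟨-, h'⟩ | ⟨-, h'⟩ <;>
                [exact hvx h'; exact hvy h'; exact hvy h'; exact hvy' h']
            rw [finsum_eq_zero_of_forall_eq_zero hz]
            have hadj : ¬ G.Adj y v := by
              intro hadj
              have : v ∈ G.neighborSet y := hadj
              rw [hNy] at this
              rcases this with rfl | h
              · exact hvx rfl
              · rw [Set.mem_singleton_iff] at h; exact hvy' h
            simp [mu, hvy, hadj]
    have hfin : (Function.support fun p : V × V => A p.1 p.2).Finite := by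
      apply Set.Finite.subset
        ((((Set.finite_singleton ((x',y') : V × V)).insert (y,y)).insert (x,y)).insert (x,x))
      intro p hp
      rcases hAsupp p.1 p.2 hp with ⟨h1, h2⟩ | ⟨h1, h2⟩ | ⟨h1, h2⟩ | ⟨h1, h2⟩ <;>
        simp [Set.mem_insert_iff, Prod.ext_iff, h1, h2]
    have hcoup : IsCoupling (mu G α x) (mu G α y) A := ⟨hAnn, hfin, hrow, hcol⟩
    -- cost
    have hne1 : ((x,x) : V × V) ∉ ({(x,y), (y,y), (x',y')} : Finset (V × V)) := by
      simp [Prod.ext_iff, hxny, hynx, hx'x.symm]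
    have hne2 : ((x,y) : V × V) ∉ ({(y,y), (x',y')} : Finset (V × V)) := by
      simp [Prod.ext_iff, hxny, hx'x.symm]
    have hne3 : ((y,y) : V × V) ∉ ({(x',y')} : Finset (V × V)) := by
      simp [Prod.ext_iff, hy'y.symm]
    have hcost : cost G A = (3*α-1)/2 + (1-α)/2 * d := by
      rw [cost]
      rw [finsum_eq_sum_of_support_subset (fun p : V × V => A p.1 p.2 * (G.dist p.1 p.2 : ℝ))
        (s := {(x,x), (x,y), (y,y), (x',y')})
        (by
          intro p hp
          have hp' : A p.1 p.2 ≠ 0 := by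
            intro h
            exact hp (by show A p.1 p.2 * (G.dist p.1 p.2 : ℝ) = 0; rw [h, zero_mul])
          rcases hAsupp p.1 p.2 hp' with ⟨h1, h2⟩ | ⟨h1, h2⟩ | ⟨h1, h2⟩ | ⟨h1, h2⟩ <;>
            simp [Set.mem_insert_iff, Prod.ext_iff, h1, h2])]
      rw [Finset.sum_insert hne1, Finset.sum_insert hne2, Finset.sum_insert hne3,
        Finset.sum_singleton]
      have e1 : (G.dist x x : ℝ) = 0 := by rw [SimpleGraph.dist_self]; norm_num
      have e2 : (G.dist x y : ℝ) = 1 := by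
        rw [SimpleGraph.dist_eq_one_iff_adj.mpr hxy]; norm_num
      have e3 : (G.dist y y : ℝ) = 0 := by rw [SimpleGraph.dist_self]; norm_num
      simp only [hAxx, hAxy, hAyy, hAx'y', e1, e2, e3]
      ring
    have hWle : W G (mu G α x) (mu G α y) ≤ (3*α-1)/2 + (1-α)/2 * d := by
      apply csInf_le
      · refine ⟨0, ?_⟩
        rintro c ⟨B, hB, rfl⟩
        apply finsum_nonneg
        intro p
        exact mul_nonneg (hB.1 p.1 p.2) (Nat.cast_nonneg _)
      · exact ⟨A, hcoup, hcost.symm⟩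
    rw [le_div_iff₀ h1α]
    rw [kIdle]
    linarith [hWle]
  have hIoo : Set.Ioo (1/3 : ℝ) 1 ∈ nhdsWithin (1:ℝ) (Set.Iio (1:ℝ)) := by
    apply Ioo_mem_nhdsLT_of_mem
    constructor <;> norm_num
  have hge : (3 - d)/2 ≤ 0 :=
    ge_of_tendsto hflat (Filter.eventually_of_mem hIoo hbound)
  linarith

/-- in a Ricci-flat graph an edge with both endpoints of degree 2
lies in no `C₃`, `C₄` or `C₅`. -/
theorem ricciFlat_deg22_no_short_cycle (G : SimpleGraph V) (hG : G.Connected) (hlf : LocFin G)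
    (hflat : RicciFlat G) (x y : V) (hxy : G.Adj x y)
    (hdx : deg G x = 2) (hdy : deg G y = 2) :
    ¬ EdgeInCycle G 3 x y ∧ ¬ EdgeInCycle G 4 x y ∧ ¬ EdgeInCycle G 5 x y := by
  classical
  refine ⟨?_, ?_, ?_⟩ <;> intro h <;> obtain ⟨p, hp, hlen⟩ := exists_path_of_edgeInCycle h
  · -- triangle: p has length 2, p = y - z - x
    cases p with
    | nil => simp at hlen
    | cons h₁ p₁ =>
      rename_i z
      cases p₁ with
      | nil => simp at hlen
      | cons h₂ p₂ =>
        rename_i z₂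
        cases p₂ with
        | cons h₃ p₃ => simp [SimpleGraph.Walk.length_cons] at hlen
        | nil =>
          -- h₁ : G.Adj y z, h₂ : G.Adj z x
          have hzy : z ≠ y := h₁.ne'
          have hzx : z ≠ x := h₂.ne
          exact key_lemma G hxy hdx hdy
            (nbhd_eq (hlf x) hdx hxy h₂.symm hzy.symm)
            (nbhd_eq (hlf y) hdy hxy.symm h₁ (Ne.symm hzx))
            hzy hzx (by rw [SimpleGraph.dist_self]; omega) (hflat x y hxy)
  · -- C4: p = y - a - b - x
    cases p with
    | nil => simp at hlen
    | cons h₁ p₁ =>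
      rename_i a
      cases p₁ with
      | nil => simp at hlen
      | cons h₂ p₂ =>
        rename_i b
        cases p₂ with
        | nil => simp at hlen
        | cons h₃ p₃ =>
          rename_i c
          cases p₃ with
          | cons h₄ p₄ => simp [SimpleGraph.Walk.length_cons] at hlen
          | nil =>
            -- h₁ : Adj y a, h₂ : Adj a b, h₃ : Adj b x
            have hnd : ([y, a, b, x] : List V).Nodup := by
              simpa [SimpleGraph.Walk.support_cons] using hp.support_nodup
            simp only [List.nodup_cons, List.mem_cons, List.not_mem_nil,
              List.mem_singleton, List.nodup_nil, or_false, and_true] at hnd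
            have hax : a ≠ x := by tauto
            have hby : b ≠ y := by tauto
            have hya : y ≠ a := h₁.ne
            have hbx : b ≠ x := h₃.ne
            have hdba : G.dist b a ≤ 2 := by
              have := SimpleGraph.dist_le (SimpleGraph.Walk.cons h₂.symm SimpleGraph.Walk.nil)
              simpa using this.trans (by norm_num)
            exact key_lemma G hxy hdx hdy
              (nbhd_eq (hlf x) hdx hxy h₃.symm (by tauto))
              (nbhd_eq (hlf y) hdy hxy.symm h₁ (Ne.symm hax))
              hby hax hdba (hflat x y hxy)
  · -- C5: p = y - a - b - c - x
    cases p with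
    | nil => simp at hlen
    | cons h₁ p₁ =>
      rename_i a
      cases p₁ with
      | nil => simp at hlen
      | cons h₂ p₂ =>
        rename_i b
        cases p₂ with
        | nil => simp at hlen
        | cons h₃ p₃ =>
          rename_i c
          cases p₃ with
          | nil => simp at hlen
          | cons h₄ p₄ =>
            rename_i e
            cases p₄ with
            | cons h₅ p₅ => simp [SimpleGraph.Walk.length_cons] at hlen
            | nil =>
              -- h₁ : Adj y a, h₂ : Adj a b, h₃ : Adj b c, h₄ : Adj c x
              have hnd : ([y, a, b, c, x] : List V).Nodup := by
                simpa [SimpleGraph.Walk.support_cons] using hp.support_nodup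
              simp only [List.nodup_cons, List.mem_cons, List.not_mem_nil,
                List.mem_singleton, List.nodup_nil, or_false, and_true] at hnd
              have hax : a ≠ x := by tauto
              have hcy : c ≠ y := by tauto
              have hyc : y ≠ c := Ne.symm hcy
              have hdca : G.dist c a ≤ 2 := by
                have := SimpleGraph.dist_le
                  (SimpleGraph.Walk.cons h₃.symm (SimpleGraph.Walk.cons h₂.symm
                    SimpleGraph.Walk.nil))
                simpa using this
              exact key_lemma G hxy hdx hdy
                (nbhd_eq (hlf x) hdx hxy h₄.symm hyc)
                (nbhd_eq (hlf y) hdy hxy.symm h₁ (Ne.symm hax))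
                hcy hax hdca (hflat x y hxy)


end RicciFlatPaper
end
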